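/- arXiv:math/0605664 — 9 statements merged into one kernel-verified Lean document; each statement's English description precedes it below -/
import Mathlib

section
/- Let Λ be a commutative local uniserial ring with radical generator p, let 1 ≤ s < t−1, B = Λ/(p^t) ⊕ Λ/(p^s), and A = Λ·(p^{t−2}, p^{s−1}) ⊆ B. Then the pair (B, A) is indecomposable in the category of pairs (module, submodule): there is no nontrivial direct sum decomposition B = B₁ ⊕ B₂ with A = (A ∩ B₁) ⊕ (A ∩ B₂) and both B₁, B₂ nonzero. -/
namespace QIndecAux

theorem mysmul {R : Type} [CommRing R] (I : Ideal R) (r x : R) :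
    r • (Ideal.Quotient.mk I x) = Ideal.Quotient.mk I (r * x) := by
  rw [Algebra.smul_def, Ideal.Quotient.algebraMap_eq, map_mul]

theorem comb {R : Type} [CommRing R] (I : Ideal R) (r1 r2 a b : R) :
    r1 • (Ideal.Quotient.mk I a) + r2 • (Ideal.Quotient.mk I b)
      = Ideal.Quotient.mk I (r1 * a + r2 * b) := by
  rw [mysmul, mysmul, map_add]

theorem myone {R : Type} [CommRing R] (I : Ideal R) (r : R) :
    r • (1 : R ⧸ I) = Ideal.Quotient.mk I r := by
  rw [show (1 : R ⧸ I) = Ideal.Quotient.mk I 1 from rfl, mysmul, mul_one]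

variable {Λ : Type} [CommRing Λ] [IsLocalRing Λ] {p : Λ} {n : ℕ}

theorem form (hmax : IsLocalRing.maximalIdeal Λ = Ideal.span {p})
    (hlen : p ^ n = 0) {y : Λ} (hy : y ≠ 0) :
    ∃ k, k < n ∧ ∃ w : Λ, IsUnit w ∧ y = w * p ^ k := by
  classical
  have hex : ∃ k, ¬ p ^ k ∣ y := ⟨n, by rw [hlen]; simpa [zero_dvd_iff] using hy⟩
  set k' := Nat.find hex with hk'def
  have hk' : ¬ p ^ k' ∣ y := Nat.find_spec hex
  have hk'pos : 0 < k' := by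
    rcases Nat.eq_zero_or_pos k' with h | h
    · exact absurd (h ▸ hk') (by simp)
    · exact h
  have hk'le : k' ≤ n := Nat.find_min' hex (by rw [hlen]; simpa [zero_dvd_iff] using hy)
  have hdvd : p ^ (k' - 1) ∣ y := not_not.mp (Nat.find_min hex (by omega))
  obtain ⟨w, hw⟩ := hdvd
  have hpw : ¬ p ∣ w := by
    intro ⟨w2, hw2⟩
    apply hk'
    refine ⟨w2, ?_⟩
    rw [hw, hw2, show p ^ (k' - 1) * (p * w2) = p ^ (k' - 1 + 1) * w2 by ring,
      show k' - 1 + 1 = k' by omega]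
  have hwu : IsUnit w := by
    by_contra h
    exact hpw (Ideal.mem_span_singleton.mp
      (hmax ▸ (IsLocalRing.mem_maximalIdeal w).mpr h))
  exact ⟨k' - 1, by omega, w, hwu, by rw [hw]; ring⟩

theorem div_lemma (hmax : IsLocalRing.maximalIdeal Λ = Ideal.span {p})
    (hlen : p ^ n = 0) (hlen' : p ^ (n - 1) ≠ 0)
    {a b : ℕ} (hab : a ≤ b) (hbn : b ≤ n) {y : Λ} (h : p ^ b ∣ y * p ^ a) :
    p ^ (b - a) ∣ y := by
  have hnil : ∀ z : Λ, IsNilpotent (p * z) := fun z => ⟨n, by rw [mul_pow, hlen, zero_mul]⟩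
  rcases eq_or_ne y 0 with rfl | hy
  · exact dvd_zero _
  obtain ⟨k, hkn, w, hwu, rfl⟩ := form hmax hlen hy
  have h2 : p ^ b ∣ p ^ (k + a) := by
    have he : w * p ^ k * p ^ a = p ^ (k + a) * w := by rw [pow_add]; ring
    exact (IsUnit.dvd_mul_right hwu).mp (he ▸ h)
  by_cases hk : b ≤ k + a
  · exact dvd_mul_of_dvd_right (pow_dvd_pow p (by omega)) w
  · exfalso
    push_neg at hk
    obtain ⟨m, hm⟩ := h2
    have hz : p ^ (k + a) * (1 - p * (p ^ (b - (k + a) - 1) * m)) = 0 := by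
      have he : p ^ b = p ^ (k + a) * (p * p ^ (b - (k + a) - 1)) := by
        rw [← pow_succ', ← pow_add]
        congr 1
        omega
      rw [mul_sub, mul_one]
      nth_rewrite 1 [hm]
      rw [he]
      ring
    have hu : IsUnit (1 - p * (p ^ (b - (k + a) - 1) * m)) :=
      IsNilpotent.isUnit_one_sub (hnil _)
    have hz2 : p ^ (k + a) = 0 := (IsUnit.mul_left_eq_zero hu).mp hz
    apply hlen'
    have : p ^ (n - 1) = p ^ (k + a) * p ^ (n - 1 - (k + a)) := by
      rw [← pow_add]; congr 1; omega
    rw [this, hz2, zero_mul]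

theorem key (p : Λ) (n : ℕ)
    (hmax : IsLocalRing.maximalIdeal Λ = Ideal.span {p})
    (hlen : p ^ n = 0) (hlen' : p ^ (n - 1) ≠ 0)
    (s t : ℕ) (hs : 1 ≤ s) (hst : s < t - 1) (htn : t ≤ n)
    (B₁ B₂ : Submodule Λ ((Λ ⧸ Ideal.span {p ^ t}) × (Λ ⧸ Ideal.span {p ^ s})))
    (hcompl : IsCompl B₁ B₂)
    (hq : (Ideal.Quotient.mk (Ideal.span {p ^ t}) (p ^ (t - 2)),
           Ideal.Quotient.mk (Ideal.span {p ^ s}) (p ^ (s - 1))) ∈ B₁) :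
    B₂ = ⊥ := by
  have hts : s + 2 ≤ t := by omega
  have hn : 3 ≤ n := by omega
  have zt : ∀ r : Λ, Ideal.Quotient.mk (Ideal.span {p ^ t}) r = 0 ↔ p ^ t ∣ r := fun r => by
    rw [Ideal.Quotient.eq_zero_iff_mem, Ideal.mem_span_singleton]
  have zs : ∀ r : Λ, Ideal.Quotient.mk (Ideal.span {p ^ s}) r = 0 ↔ p ^ s ∣ r := fun r => by
    rw [Ideal.Quotient.eq_zero_iff_mem, Ideal.mem_span_singleton]
  have hzero : ∀ w, w ∈ B₁ → w ∈ B₂ → w = 0 := by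
    intro w hw1 hw2
    have h := hcompl.inf_eq_bot
    have : w ∈ B₁ ⊓ B₂ := Submodule.mem_inf.mpr ⟨hw1, hw2⟩
    rw [h] at this
    simpa using this
  have he1 : ((Ideal.Quotient.mk (Ideal.span {p ^ t}) 1,
      (0 : Λ ⧸ Ideal.span {p ^ s}))) ∈ B₁ ⊔ B₂ := by
    rw [hcompl.sup_eq_top]; trivial
  have he2 : (((0 : Λ ⧸ Ideal.span {p ^ t}),
      Ideal.Quotient.mk (Ideal.span {p ^ s}) 1)) ∈ B₁ ⊔ B₂ := by
    rw [hcompl.sup_eq_top]; trivial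
  obtain ⟨u₁, hu₁, u₂, hu₂, hu⟩ := Submodule.mem_sup.mp he1
  obtain ⟨v₁, hv₁, v₂, hv₂, hv⟩ := Submodule.mem_sup.mp he2
  obtain ⟨α, hα⟩ := Ideal.Quotient.mk_surjective u₁.1
  obtain ⟨β, hβ⟩ := Ideal.Quotient.mk_surjective u₁.2
  obtain ⟨c, hc⟩ := Ideal.Quotient.mk_surjective v₁.1
  obtain ⟨δ, hδ⟩ := Ideal.Quotient.mk_surjective v₁.2
  -- components of u₂, v₂
  have hu2f : u₂.1 = Ideal.Quotient.mk (Ideal.span {p ^ t}) (1 - α) := by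
    have h := congrArg Prod.fst hu
    rw [Prod.fst_add] at h
    have h' : u₂.1 = Ideal.Quotient.mk (Ideal.span {p ^ t}) 1 - u₁.1 := eq_sub_of_add_eq' h
    rw [h', ← hα, ← map_sub]
  have hu2s : u₂.2 = Ideal.Quotient.mk (Ideal.span {p ^ s}) (0 - β) := by
    have h := congrArg Prod.snd hu
    rw [Prod.snd_add] at h
    have h' : u₂.2 = Ideal.Quotient.mk (Ideal.span {p ^ s}) 0 - u₁.2 := by
      refine eq_sub_of_add_eq' ?_
      rw [map_zero]
      exact h
    rw [h', ← hβ, ← map_sub]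
  have hv2f : v₂.1 = Ideal.Quotient.mk (Ideal.span {p ^ t}) (0 - c) := by
    have h := congrArg Prod.fst hv
    rw [Prod.fst_add] at h
    have h' : v₂.1 = Ideal.Quotient.mk (Ideal.span {p ^ t}) 0 - v₁.1 := by
      refine eq_sub_of_add_eq' ?_
      rw [map_zero]
      exact h
    rw [h', ← hc, ← map_sub]
  have hv2s : v₂.2 = Ideal.Quotient.mk (Ideal.span {p ^ s}) (1 - δ) := by
    have h := congrArg Prod.snd hv
    rw [Prod.snd_add] at h
    have h' : v₂.2 = Ideal.Quotient.mk (Ideal.span {p ^ s}) 1 - v₁.2 := eq_sub_of_add_eq' h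
    rw [h', ← hδ, ← map_sub]
  -- p^s • v₁ = 0, hence D1
  have hv1z : p ^ s • v₁ = 0 := by
    apply hzero _ (Submodule.smul_mem _ _ hv₁)
    have hsum : p ^ s • v₁ + p ^ s • v₂ = 0 := by
      rw [← smul_add, hv]
      apply Prod.ext
      · simp
      · rw [Prod.smul_snd]
        simp only [mysmul, mul_one]
        exact (zs _).mpr dvd_rfl
    have : p ^ s • v₁ = -(p ^ s • v₂) := eq_neg_of_add_eq_zero_left hsum
    rw [this]
    exact Submodule.neg_mem _ (Submodule.smul_mem _ _ hv₂)
  have D1 : p ^ t ∣ p ^ s * c := by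
    have h := congrArg Prod.fst hv1z
    rw [Prod.smul_fst, ← hc, mysmul] at h
    exact (zt _).mp h
  -- main relation from q ∈ B₁
  have hw0 : p ^ (t - 2) • u₂ + p ^ (s - 1) • v₂ = 0 := by
    apply hzero
    · have hqe : p ^ (t - 2) • u₂ + p ^ (s - 1) • v₂ =
          (Ideal.Quotient.mk (Ideal.span {p ^ t}) (p ^ (t - 2)),
           Ideal.Quotient.mk (Ideal.span {p ^ s}) (p ^ (s - 1)))
          - (p ^ (t - 2) • u₁ + p ^ (s - 1) • v₁) := by
        have hq2 : (Ideal.Quotient.mk (Ideal.span {p ^ t}) (p ^ (t - 2)),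
            Ideal.Quotient.mk (Ideal.span {p ^ s}) (p ^ (s - 1)))
            = p ^ (t - 2) • (u₁ + u₂) + p ^ (s - 1) • (v₁ + v₂) := by
          rw [hu, hv]
          apply Prod.ext
          · rw [Prod.fst_add, Prod.smul_fst, Prod.smul_fst]
            simp [mysmul, myone]
          · rw [Prod.snd_add, Prod.smul_snd, Prod.smul_snd]
            simp [mysmul, myone]
        rw [hq2, smul_add, smul_add]
        abel
      rw [hqe]
      exact Submodule.sub_mem _ hq (Submodule.add_mem _
        (Submodule.smul_mem _ _ hu₁) (Submodule.smul_mem _ _ hv₁))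
    · exact Submodule.add_mem _ (Submodule.smul_mem _ _ hu₂) (Submodule.smul_mem _ _ hv₂)
  have D2 : p ^ t ∣ p ^ (t - 2) * (1 - α) + p ^ (s - 1) * (0 - c) := by
    have h := congrArg Prod.fst hw0
    rw [Prod.fst_add, Prod.smul_fst, Prod.smul_fst, hu2f, hv2f, comb] at h
    exact (zt _).mp h
  have D3 : p ^ s ∣ p ^ (t - 2) * (0 - β) + p ^ (s - 1) * (1 - δ) := by
    have h := congrArg Prod.snd hw0
    rw [Prod.snd_add, Prod.smul_snd, Prod.smul_snd, hu2s, hv2s, comb] at h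
    exact (zs _).mp h
  -- consequences
  have hc' : p ^ (t - s) ∣ c :=
    div_lemma hmax hlen hlen' (le_of_lt (by omega)) htn (by rw [mul_comm] at D1; exact D1)
  obtain ⟨c₂, hc₂⟩ := hc'
  have hδ1 : p ∣ 1 - δ := by
    have h1 : p ^ s ∣ p ^ (t - 2) * (0 - β) :=
      dvd_mul_of_dvd_left (pow_dvd_pow p (by omega)) _
    have h2 : p ^ s ∣ p ^ (s - 1) * (1 - δ) := by
      have := dvd_sub D3 h1
      simpa using this
    have h3 : p ^ s ∣ (1 - δ) * p ^ (s - 1) := by rwa [mul_comm] at h2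
    have := div_lemma hmax hlen hlen' (by omega : s - 1 ≤ s) (by omega) h3
    simpa [show s - (s - 1) = 1 by omega] using this
  have hα1 : p ∣ 1 - α := by
    have h1 : p ^ (t - 1) ∣ p ^ (s - 1) * (0 - c) := by
      rw [hc₂, show p ^ (s - 1) * (0 - (p ^ (t - s) * c₂))
        = (p ^ (s - 1) * p ^ (t - s)) * (-c₂) by ring, ← pow_add,
        show s - 1 + (t - s) = t - 1 by omega]
      exact Dvd.intro _ rfl
    have hsum : p ^ (t - 1) ∣ p ^ (t - 2) * (1 - α) + p ^ (s - 1) * (0 - c) :=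
      (pow_dvd_pow p (by omega)).trans D2
    have h2 : p ^ (t - 1) ∣ p ^ (t - 2) * (1 - α) := by
      have := dvd_sub hsum h1
      simpa using this
    have h3 : p ^ (t - 1) ∣ (1 - α) * p ^ (t - 2) := by rwa [mul_comm] at h2
    have := div_lemma hmax hlen hlen' (by omega : t - 2 ≤ t - 1) (by omega) h3
    simpa [show t - 1 - (t - 2) = 1 by omega] using this
  have hnil : ∀ z : Λ, IsNilpotent (p * z) := fun z => ⟨n, by rw [mul_pow, hlen, zero_mul]⟩
  have unit_of : ∀ x : Λ, p ∣ 1 - x → IsUnit x := by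
    rintro x ⟨r, hr⟩
    have : x = 1 - p * r := by rw [← hr]; ring
    rw [this]
    exact IsNilpotent.isUnit_one_sub (hnil r)
  have hαu := unit_of α hα1
  have hδu := unit_of δ hδ1
  have hdu : IsUnit (α * δ - c * β) := by
    have hsplit : p ^ (t - s) = p * p ^ (t - s - 1) := by
      rw [← pow_succ']
      congr 1
      omega
    rw [show α * δ - c * β = -(c * β) + α * δ by ring]
    refine IsNilpotent.isUnit_add_right_of_commute ?_ (hαu.mul hδu) (Commute.all _ _)
    rw [show -(c * β) = p * (-(p ^ (t - s - 1) * c₂ * β)) by rw [hc₂, hsplit]; ring]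
    exact hnil _
  -- finish: every z ∈ B₂ is zero
  rw [eq_bot_iff]
  intro z hz
  obtain ⟨x, hx⟩ := Ideal.Quotient.mk_surjective z.1
  obtain ⟨y, hy⟩ := Ideal.Quotient.mk_surjective z.2
  have hz0 : x • u₁ + y • v₁ = 0 := by
    apply hzero
    · exact Submodule.add_mem _ (Submodule.smul_mem _ _ hu₁) (Submodule.smul_mem _ _ hv₁)
    · have hze : z = x • (u₁ + u₂) + y • (v₁ + v₂) := by
        rw [hu, hv]
        apply Prod.ext
        · rw [Prod.fst_add, Prod.smul_fst, Prod.smul_fst]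
          simp [mysmul, myone, ← hx]
        · rw [Prod.snd_add, Prod.smul_snd, Prod.smul_snd]
          simp [mysmul, myone, ← hy]
      have : x • u₁ + y • v₁ = z - (x • u₂ + y • v₂) := by
        rw [hze, smul_add, smul_add]; abel
      rw [this]
      exact Submodule.sub_mem _ hz (Submodule.add_mem _
        (Submodule.smul_mem _ _ hu₂) (Submodule.smul_mem _ _ hv₂))
  have E1 : p ^ t ∣ x * α + y * c := by
    have h := congrArg Prod.fst hz0
    rw [Prod.fst_add, Prod.smul_fst, Prod.smul_fst, ← hα, ← hc, comb] at h
    exact (zt _).mp h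
  have E2 : p ^ s ∣ x * β + y * δ := by
    have h := congrArg Prod.snd hz0
    rw [Prod.snd_add, Prod.smul_snd, Prod.smul_snd, ← hβ, ← hδ, comb] at h
    exact (zs _).mp h
  have hxd : p ^ t ∣ x * (α * δ - c * β) := by
    have h1 : p ^ t ∣ δ * (x * α + y * c) := E1.mul_left δ
    have h2 : p ^ t ∣ c * (x * β + y * δ) := by
      obtain ⟨m, hm⟩ := E2
      refine ⟨c₂ * m, ?_⟩
      rw [hm, hc₂, show p ^ (t - s) * c₂ * (p ^ s * m) = (p ^ (t - s) * p ^ s) * (c₂ * m) by ring,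
        ← pow_add, show t - s + s = t by omega]
    rw [show x * (α * δ - c * β) = δ * (x * α + y * c) - c * (x * β + y * δ) by ring]
    exact dvd_sub h1 h2
  have hxt : p ^ t ∣ x := (IsUnit.dvd_mul_right hdu).mp hxd
  have hyt : p ^ s ∣ y := by
    have h1 : p ^ s ∣ x * β :=
      dvd_mul_of_dvd_left ((pow_dvd_pow p (by omega)).trans hxt) β
    have h2 : p ^ s ∣ y * δ := by
      have := dvd_sub E2 h1
      simpa using this
    exact (IsUnit.dvd_mul_right hδu).mp h2
  show z ∈ (⊥ : Submodule Λ _)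
  rw [Submodule.mem_bot]
  apply Prod.ext
  · rw [← hx]; exact (zt _).mpr hxt
  · rw [← hy]; exact (zs _).mpr hyt

end QIndecAux

/-- For `1 ≤ s < t−1`, `B = Λ/(p^t) ⊕ Λ/(p^s)` and
`A = Λ·(p^{t−2}, p^{s−1})`, the pair `(B, A)` is indecomposable: there is no
decomposition `B = B₁ ⊕ B₂` with both `Bᵢ` nonzero and `A = (A ∩ B₁) ⊕ (A ∩ B₂)`. -/
theorem Q_indecomposable
    (Λ : Type) [CommRing Λ] [IsLocalRing Λ] (p : Λ) (n : ℕ)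
    (hmax : IsLocalRing.maximalIdeal Λ = Ideal.span {p})
    (huni : ∀ I J : Ideal Λ, I ≤ J ∨ J ≤ I)
    (hlen : p ^ n = 0) (hlen' : p ^ (n - 1) ≠ 0)
    (s t : ℕ) (hs : 1 ≤ s) (hst : s < t - 1) (htn : t ≤ n)
    (A : Submodule Λ ((Λ ⧸ Ideal.span {p ^ t}) × (Λ ⧸ Ideal.span {p ^ s})))
    (hA : A = Submodule.span Λ {(Ideal.Quotient.mk (Ideal.span {p ^ t}) (p ^ (t - 2)),
               Ideal.Quotient.mk (Ideal.span {p ^ s}) (p ^ (s - 1)))}) :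
    ¬ ∃ B₁ B₂ : Submodule Λ ((Λ ⧸ Ideal.span {p ^ t}) × (Λ ⧸ Ideal.span {p ^ s})),
        B₁ ≠ ⊥ ∧ B₂ ≠ ⊥ ∧ IsCompl B₁ B₂ ∧ A = (A ⊓ B₁) ⊔ (A ⊓ B₂) := by
  rintro ⟨B₁, B₂, hB₁, hB₂, hcompl, hsum⟩
  set q : (Λ ⧸ Ideal.span {p ^ t}) × (Λ ⧸ Ideal.span {p ^ s}) :=
    (Ideal.Quotient.mk (Ideal.span {p ^ t}) (p ^ (t - 2)),
     Ideal.Quotient.mk (Ideal.span {p ^ s}) (p ^ (s - 1))) with hqdef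
  have hqA : q ∈ A := by
    rw [hA]
    exact Submodule.mem_span_singleton_self _
  have hcases : q ∈ B₁ ∨ q ∈ B₂ := by
    rcases huni
        (Submodule.comap (LinearMap.toSpanSingleton Λ _ q) B₁)
        (Submodule.comap (LinearMap.toSpanSingleton Λ _ q) B₂) with h | h
    · right
      have hle : A ≤ B₂ := by
        conv_lhs => rw [hsum]
        refine sup_le ?_ inf_le_right
        rintro w hw
        rw [Submodule.mem_inf] at hw
        obtain ⟨hwA, hwB⟩ := hw
        rw [hA] at hwA
        obtain ⟨r, rfl⟩ := Submodule.mem_span_singleton.mp hwA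
        have hr : r ∈ Submodule.comap (LinearMap.toSpanSingleton Λ _ q) B₁ := by
          rw [Submodule.mem_comap, LinearMap.toSpanSingleton_apply]
          exact hwB
        have := h hr
        rw [Submodule.mem_comap, LinearMap.toSpanSingleton_apply] at this
        exact this
      exact hle hqA
    · left
      have hle : A ≤ B₁ := by
        conv_lhs => rw [hsum]
        refine sup_le inf_le_right ?_
        rintro w hw
        rw [Submodule.mem_inf] at hw
        obtain ⟨hwA, hwB⟩ := hw
        rw [hA] at hwA
        obtain ⟨r, rfl⟩ := Submodule.mem_span_singleton.mp hwA
        have hr : r ∈ Submodule.comap (LinearMap.toSpanSingleton Λ _ q) B₂ := by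
          rw [Submodule.mem_comap, LinearMap.toSpanSingleton_apply]
          exact hwB
        have := h hr
        rw [Submodule.mem_comap, LinearMap.toSpanSingleton_apply] at this
        exact this
      exact hle hqA
  rcases hcases with hq1 | hq2
  · exact hB₂ (QIndecAux.key p n hmax hlen hlen' s t hs hst htn B₁ B₂ hcompl hq1)
  · exact hB₁ (QIndecAux.key p n hmax hlen hlen' s t hs hst htn B₂ B₁ hcompl.symm hq2)
end

section
/- Let Λ be a commutative local uniserial ring of length n with radical generator p (so Λ is self-injective). Let (B;A) be a pair with B a finitely generated Λ-module, A ⊆ B a submodule, and let f : Λ → B be a Λ-linear map (viewed as a morphism of pairs (Λ;0) → (B;A)). If f is injective and (im f) ∩ A = 0, then (im f) is a direct summand of B admitting a complement B' with A ⊆ B', so the pair (B;A) decomposes as (im f; 0) ⊕ (B'; A). -/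
/-- Over a commutative local uniserial ring `Λ` of length `n` (self-injective),
if `(B;A)` is a pair with `B` finitely generated and `f : Λ → B` is an injective `Λ`-linear
map with `(im f) ∩ A = 0`, then `im f` is a direct summand of `B` admitting a complement
`B'` with `A ⊆ B'`; so `(B;A) = (im f; 0) ⊕ (B'; A)`. -/
theorem free_rank_one_splits_off
    (Λ : Type) [CommRing Λ] [IsLocalRing Λ] (p : Λ) (n : ℕ)
    (hmax : IsLocalRing.maximalIdeal Λ = Ideal.span {p})
    (huni : ∀ I J : Ideal Λ, I ≤ J ∨ J ≤ I)
    (hlen : p ^ n = 0) (hlen' : p ^ (n - 1) ≠ 0)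
    (B : Type) [AddCommGroup B] [Module Λ B] [Module.Finite Λ B]
    (A : Submodule Λ B) (f : Λ →ₗ[Λ] B) (hf : Function.Injective f)
    (hfA : LinearMap.range f ⊓ A = ⊥) :
    ∃ B' : Submodule Λ B, IsCompl (LinearMap.range f) B' ∧ A ≤ B' := by
  classical
  -- powers of p vanish only from exponent n on
  have hpow : ∀ m : ℕ, p ^ m = 0 → n ≤ m := by
    intro m hm
    by_contra h
    push_neg at h
    apply hlen'
    have : p ^ (n - 1) = p ^ m * p ^ (n - 1 - m) := by
      rw [← pow_add]; congr 1; omega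
    rw [this, hm, zero_mul]
  -- every ideal is a power of the maximal ideal
  have hideal : ∀ I : Ideal Λ, ∃ k ≤ n, I = Ideal.span {p ^ k} := by
    intro I
    have hn : p ^ n ∈ I := by rw [hlen]; exact I.zero_mem
    have hex : ∃ k, p ^ k ∈ I := ⟨n, hn⟩
    have hkmem : p ^ Nat.find hex ∈ I := Nat.find_spec hex
    have hkle : Nat.find hex ≤ n := Nat.find_le hn
    refine ⟨Nat.find hex, hkle, le_antisymm ?_ ?_⟩
    · intro x hx
      rcases Nat.eq_zero_or_pos (Nat.find hex) with h0 | hposk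
      · rw [h0, pow_zero, Ideal.span_singleton_one]; trivial
      · obtain ⟨m, hm⟩ := Nat.exists_eq_succ_of_ne_zero hposk.ne'
        have hmnot : p ^ m ∉ I := Nat.find_min hex (by omega)
        rcases huni (Ideal.span {x}) (Ideal.span {p ^ m}) with h1 | h2
        · have hx' : x ∈ Ideal.span {p ^ m} := h1 (Ideal.mem_span_singleton_self x)
          rw [Ideal.mem_span_singleton] at hx'
          obtain ⟨c, hc⟩ := hx'
          by_cases hcu : IsUnit c
          · exfalso
            obtain ⟨u, rfl⟩ := hcu
            apply hmnot
            have : (p : Λ) ^ m = x * (↑u⁻¹ : Λ) := by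
              rw [hc, mul_assoc, Units.mul_inv, mul_one]
            rw [this]
            exact I.mul_mem_right _ hx
          · have hcmem : c ∈ IsLocalRing.maximalIdeal Λ := hcu
            rw [hmax, Ideal.mem_span_singleton] at hcmem
            obtain ⟨d, hd⟩ := hcmem
            rw [Ideal.mem_span_singleton, hm]
            exact ⟨d, by rw [hc, hd, pow_succ]; ring⟩
        · exfalso
          apply hmnot
          have : Ideal.span {x} ≤ I := by
            rw [Ideal.span_singleton_le_iff_mem]; exact hx
          exact this (h2 (Ideal.mem_span_singleton_self _))
    · rw [Ideal.span_singleton_le_iff_mem]; exact hkmem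
  -- Baer's criterion holds for Λ
  have hbaer : Module.Baer Λ Λ := by
    intro I g
    obtain ⟨k, hkn, rfl⟩ := hideal I
    have hmem : p ^ k ∈ Ideal.span {p ^ k} := Ideal.mem_span_singleton_self _
    set a := g ⟨p ^ k, hmem⟩ with ha
    have hann : p ^ (n - k) * a = 0 := by
      have h0 : p ^ (n - k) • (⟨p ^ k, hmem⟩ : Ideal.span {p ^ k}) = 0 := by
        ext
        show p ^ (n - k) * p ^ k = 0
        rw [← pow_add]
        have : n - k + k = n := by omega
        rw [this, hlen]
      calc p ^ (n - k) * a = p ^ (n - k) • a := rfl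
        _ = g (p ^ (n - k) • ⟨p ^ k, hmem⟩) := by rw [map_smul]
        _ = 0 := by rw [h0, map_zero]
    obtain ⟨j, hjn, hj⟩ := hideal (Ideal.span {a})
    have hpj : p ^ j ∈ Ideal.span {a} := by rw [hj]; exact Ideal.mem_span_singleton_self _
    rw [Ideal.mem_span_singleton] at hpj
    obtain ⟨d, hd⟩ := hpj
    have hz : p ^ (n - k + j) = 0 := by
      rw [pow_add, hd, ← mul_assoc, hann, zero_mul]
    have hjk : k ≤ j := by have := hpow _ hz; omega
    have haj : a ∈ Ideal.span {p ^ j} := hj ▸ Ideal.mem_span_singleton_self a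
    rw [Ideal.mem_span_singleton] at haj
    obtain ⟨c, hc⟩ := haj
    refine ⟨LinearMap.toSpanSingleton Λ Λ (p ^ (j - k) * c), ?_⟩
    intro x hx
    have hx' := hx
    rw [Ideal.mem_span_singleton] at hx'
    obtain ⟨t, ht⟩ := hx'
    have hsub : (⟨x, hx⟩ : Ideal.span {p ^ k}) = t • ⟨p ^ k, hmem⟩ := by
      ext; show x = t * p ^ k; rw [ht]; ring
    rw [hsub, map_smul]
    show x • (p ^ (j - k) * c) = t • a
    have : x • (p ^ (j - k) * c) = t * (p ^ j * c) := by
      rw [smul_eq_mul, ht]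
      have : p ^ k * (p ^ (j - k)) = p ^ j := by
        rw [← pow_add]; congr 1; omega
      calc p ^ k * t * (p ^ (j - k) * c) = t * (p ^ k * p ^ (j - k) * c) := by ring
        _ = t * (p ^ j * c) := by rw [this]
    rw [this, ← hc, smul_eq_mul]
  have hinj : Module.Injective Λ Λ := hbaer.injective
  -- extend the identity along Λ → B → B ⧸ A
  set π := A.mkQ with hπ
  have hi : Function.Injective (π.comp f) := by
    intro x y hxy
    apply hf
    have hmem : f x - f y ∈ A := by
      have : π (f x - f y) = 0 := by
        rw [map_sub]
        simpa using sub_eq_zero_of_eq hxy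
      rwa [hπ, Submodule.mkQ_apply, Submodule.Quotient.mk_eq_zero] at this
    have hrange : f x - f y ∈ LinearMap.range f := ⟨x - y, by rw [map_sub]⟩
    have : f x - f y ∈ LinearMap.range f ⊓ A := ⟨hrange, hmem⟩
    rw [hfA] at this
    exact sub_eq_zero.mp this
  obtain ⟨h, hh⟩ := hinj.out (π.comp f) hi LinearMap.id
  set H := h.comp π with hH
  have hHf : ∀ x, H (f x) = x := fun x => hh x
  refine ⟨LinearMap.ker H, ⟨?_, ?_⟩, ?_⟩
  · rw [disjoint_iff]
    ext x
    simp only [Submodule.mem_inf, Submodule.mem_bot, LinearMap.mem_ker, LinearMap.mem_range]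
    constructor
    · rintro ⟨⟨a, rfl⟩, hk⟩
      rw [hHf] at hk
      rw [hk, map_zero]
    · rintro rfl
      exact ⟨⟨0, by rw [map_zero]⟩, map_zero _⟩
  · rw [codisjoint_iff, eq_top_iff]
    intro b _
    have : b = f (H b) + (b - f (H b)) := by abel
    rw [this]
    refine Submodule.add_mem_sup ⟨H b, rfl⟩ ?_
    show H (b - f (H b)) = 0
    rw [map_sub, hHf, sub_self]
  · intro a haA
    show H a = 0
    have : π a = 0 := by
      rw [hπ, Submodule.mkQ_apply, Submodule.Quotient.mk_eq_zero]
      exact haA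
    rw [hH, LinearMap.comp_apply, this, map_zero]
end

section
/- Let Λ be a commutative local uniserial ring of length n with radical generator p. Let (B;A) be a pair with B finitely generated and p·A = 0 (A is semisimple). If there is an embedding of pairs (E; soc E) → (B;A) where E ≅ Λ is free of rank 1, identifying E with a submodule of B with soc E ⊆ A, then the pair splits: there exists B' with B = E ⊕ B' and A = soc E ⊕ (A ∩ B'). -/
/-!
A local ring `Λ` whose maximal ideal is generated by a nilpotent `p` is self-injective: every
element is a unit times a power of `p`, so every ideal is some `(p ^ k)`, and a map `(p ^ k) → Λ`
sends `p ^ k` to an element killed by `p ^ (N - k)`, `N` the nilpotency class of `p`, hence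
divisible by `p ^ k` (Baer's criterion). So `f` has a retraction `g`, and the projection `f ∘ g`
onto `E` maps `A` into `soc E ⊆ A` because `p • A = 0`; hence `A` splits along
`B = E ⊕ ker (f ∘ g)`.
-/

open LinearMap

theorem nilpotencyClass_le_of_pow_eq_zero {M : Type*} [MonoidWithZero M] {x : M} {m : ℕ}
    (hm : x ^ m = 0) : nilpotencyClass x ≤ m :=
  Nat.sInf_le hm

namespace IsLocalRing

variable {R : Type*} [CommRing R] [IsLocalRing R] {p : R}

theorem exists_eq_pow_mul_isUnit (hmax : maximalIdeal R = Ideal.span {p}) (hp : IsNilpotent p)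
    (x : R) : ∃ (j : ℕ) (u : R), IsUnit u ∧ x = p ^ j * u := by
  obtain ⟨N, hN⟩ := hp
  by_cases hx : x = 0
  · exact ⟨N, 1, isUnit_one, by simp [hx, hN]⟩
  have hfin : FiniteMultiplicity p x :=
    ⟨N, fun h ↦ hx (zero_dvd_iff.mp (by rwa [pow_succ, hN, zero_mul] at h))⟩
  obtain ⟨u, hu, hpu⟩ := hfin.exists_eq_pow_mul_and_not_dvd
  refine ⟨_, u, ?_, hu⟩
  by_contra hunit
  have : u ∈ Ideal.span {p} := hmax ▸ (mem_maximalIdeal u).mpr hunit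
  exact hpu (Ideal.mem_span_singleton.mp this)

theorem exists_le_nilpotencyClass_eq_span_pow (hmax : maximalIdeal R = Ideal.span {p})
    (hp : IsNilpotent p) (I : Ideal R) : ∃ k ≤ nilpotencyClass p, I = Ideal.span {p ^ k} := by
  classical
  have hex : ∃ k, p ^ k ∈ I := ⟨_, by rw [pow_nilpotencyClass hp]; exact I.zero_mem⟩
  refine ⟨Nat.find hex, Nat.find_min' hex (by rw [pow_nilpotencyClass hp]; exact I.zero_mem),
    le_antisymm (fun x hx ↦ ?_) ((Ideal.span_singleton_le_iff_mem I).mpr (Nat.find_spec hex))⟩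
  obtain ⟨j, u, hu, rfl⟩ := exists_eq_pow_mul_isUnit hmax hp x
  have hj : p ^ j ∈ I := by simpa [mul_assoc] using I.mul_mem_right (↑hu.unit⁻¹) hx
  exact Ideal.mem_span_singleton.mpr ((pow_dvd_pow p (Nat.find_min' hex hj)).mul_right u)

theorem pow_dvd_of_pow_sub_mul_eq_zero (hmax : maximalIdeal R = Ideal.span {p})
    (hp : IsNilpotent p) {k : ℕ} (hk : k ≤ nilpotencyClass p) {y : R}
    (hy : p ^ (nilpotencyClass p - k) * y = 0) : p ^ k ∣ y := by
  obtain ⟨j, u, hu, rfl⟩ := exists_eq_pow_mul_isUnit hmax hp y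
  rw [← mul_assoc, hu.mul_left_eq_zero, ← pow_add] at hy
  have := nilpotencyClass_le_of_pow_eq_zero hy
  exact (pow_dvd_pow p (by omega)).mul_right u

theorem baer_self (hmax : maximalIdeal R = Ideal.span {p}) (hp : IsNilpotent p) :
    Module.Baer R R := by
  intro I g
  obtain ⟨k, hk, rfl⟩ := exists_le_nilpotencyClass_eq_span_pow hmax hp I
  have hgen : p ^ k ∈ Ideal.span {p ^ k} := Ideal.mem_span_singleton_self _
  have hann : p ^ (nilpotencyClass p - k) * g ⟨_, hgen⟩ = 0 := by
    rw [← smul_eq_mul, ← map_smul]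
    convert g.map_zero
    ext
    simp [← pow_add, Nat.sub_add_cancel hk, pow_nilpotencyClass hp]
  obtain ⟨z, hz⟩ := pow_dvd_of_pow_sub_mul_eq_zero hmax hp hk hann
  refine ⟨z • LinearMap.id, fun x hx ↦ ?_⟩
  obtain ⟨w, rfl⟩ := Ideal.mem_span_singleton'.mp hx
  have : (⟨w * p ^ k, hx⟩ : Ideal.span {p ^ k}) = w • ⟨_, hgen⟩ := rfl
  rw [this, map_smul, hz]
  simp only [LinearMap.smul_apply, id_apply, smul_eq_mul]
  ring

end IsLocalRing

theorem LinearMap.isProj_range_comp_of_leftInverse {R M N : Type*} [Semiring R]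
    [AddCommMonoid M] [AddCommMonoid N] [Module R M] [Module R N] {f : M →ₗ[R] N}
    {g : N →ₗ[R] M} (hgf : ∀ x, g (f x) = x) : IsProj (range f) (f ∘ₗ g) :=
  ⟨fun y ↦ mem_range_self f (g y), by rintro _ ⟨x, rfl⟩; simp [hgf]⟩

theorem LinearMap.IsProj.eq_inf_sup_inf_ker {R E : Type*} [Ring R] [AddCommGroup E] [Module R E]
    {m : Submodule R E} {π : E →ₗ[R] E} (hπ : IsProj m π) {A : Submodule R E}
    (hA : ∀ a ∈ A, π a ∈ A) : A = (A ⊓ m) ⊔ (A ⊓ ker π) := by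
  refine le_antisymm (fun a ha ↦ ?_) (sup_le inf_le_left inf_le_left)
  have hker : a - π a ∈ ker π := by simp [hπ.map_id _ (hπ.map_mem a)]
  exact Submodule.mem_sup.mpr ⟨π a, ⟨hA a ha, hπ.map_mem a⟩, a - π a,
    ⟨A.sub_mem ha (hA a ha), hker⟩, add_sub_cancel _ _⟩

theorem P1n_injective_splits_off_general
    (Λ : Type) [CommRing Λ] [IsLocalRing Λ] (p : Λ) (n : ℕ)
    (hmax : IsLocalRing.maximalIdeal Λ = Ideal.span {p})
    (hlen : p ^ n = 0)
    (B : Type) [AddCommGroup B] [Module Λ B]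
    (A : Submodule Λ B) (hpA : ∀ a ∈ A, p • a = 0)
    (f : Λ →ₗ[Λ] B) (hf : Function.Injective f)
    (E : Submodule Λ B) (hE : E = LinearMap.range f)
    (hsoc : E ⊓ LinearMap.ker (LinearMap.lsmul Λ B p) ≤ A) :
    ∃ B' : Submodule Λ B, IsCompl E B' ∧
      A = (E ⊓ LinearMap.ker (LinearMap.lsmul Λ B p)) ⊔ (A ⊓ B') := by
  have hinj := (IsLocalRing.baer_self hmax ⟨n, hlen⟩).injective
  obtain ⟨g, hgf⟩ := hinj.out f hf LinearMap.id
  have hπ : IsProj E (f ∘ₗ g) := hE ▸ isProj_range_comp_of_leftInverse hgf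
  have hsocA : A ⊓ E = E ⊓ ker (lsmul Λ B p) :=
    le_antisymm (fun a ha ↦ ⟨ha.2, hpA a ha.1⟩) (fun x hx ↦ ⟨hsoc hx, hx.1⟩)
  have hπA : ∀ a ∈ A, f (g a) ∈ A := fun a ha ↦
    hsoc ⟨hπ.map_mem a, mem_ker.mpr <| by
      rw [lsmul_apply, ← map_smul, ← map_smul, hpA a ha, map_zero, map_zero]⟩
  exact ⟨ker (f ∘ₗ g), hπ.isCompl, hsocA ▸ hπ.eq_inf_sup_inf_ker hπA⟩

/-- Over a commutative local uniserial ring `Λ` of length `n`, let `(B;A)` be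
a pair with `B` finitely generated and `p·A = 0`. If `E = im f ⊆ B` for an injective
`Λ`-linear `f : Λ → B` (so `E ≅ Λ` is free of rank 1) and `soc E ⊆ A`, then the pair
splits: there is `B'` with `B = E ⊕ B'` and `A = soc E ⊕ (A ∩ B')`. -/
theorem P1n_injective_splits_off
    (Λ : Type) [CommRing Λ] [IsLocalRing Λ] (p : Λ) (n : ℕ)
    (hmax : IsLocalRing.maximalIdeal Λ = Ideal.span {p})
    (huni : ∀ I J : Ideal Λ, I ≤ J ∨ J ≤ I)
    (hlen : p ^ n = 0) (hlen' : p ^ (n - 1) ≠ 0)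
    (B : Type) [AddCommGroup B] [Module Λ B] [Module.Finite Λ B]
    (A : Submodule Λ B) (hpA : ∀ a ∈ A, p • a = 0)
    (f : Λ →ₗ[Λ] B) (hf : Function.Injective f)
    (E : Submodule Λ B) (hE : E = LinearMap.range f)
    (hsoc : E ⊓ LinearMap.ker (LinearMap.lsmul Λ B p) ≤ A) :
    ∃ B' : Submodule Λ B, IsCompl E B' ∧
      A = (E ⊓ LinearMap.ker (LinearMap.lsmul Λ B p)) ⊔ (A ⊓ B') :=
  P1n_injective_splits_off_general Λ p n hmax hlen B A hpA f hf E hE hsoc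
end

section
/- Let Λ be a commutative local uniserial ring of length n with radical generator p. Let (B;A) be a pair with B finitely generated, p²A = 0, and soc B ⊆ A. Suppose B = ⊕_{i=1}^s B_i is a decomposition such that rad A = ⊕_i (rad A ∩ B_i). Then A = ⊕_i (A ∩ B_i), i.e. the pair (B;A) decomposes as ⊕_i (B_i; A ∩ B_i). -/
/-!
Multiplication by `p` preserves every `Bᵢ`, and since `soc B = ker p ⊆ A`, the submodule `A` is
the full preimage of `pA` under `p`. Preimages of split submodules under an endomorphism preserving
the decomposition split again: if `b = ∑ bᵢ` and `p • b ∈ pA`, then by uniqueness of components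
each `p • bᵢ` is the `i`-th component of `p • b`, which lies in `pA` because `pA` splits.
-/

namespace Submodule

variable {R M ι : Type*} [Ring R] [AddCommGroup M] [Module R M] [Fintype ι]

theorem exists_sum_eq_of_mem_iSup {N : ι → Submodule R M} {b : M} (hb : b ∈ ⨆ i, N i) :
    ∃ x : ι → M, (∀ i, x i ∈ N i) ∧ ∑ i, x i = b := by
  obtain ⟨μ, hμ⟩ := (mem_iSup_finset_iff_exists_sum (s := Finset.univ) N b).mp (by simpa using hb)
  exact ⟨fun i => μ i, fun i => (μ i).2, hμ⟩

theorem comap_eq_iSup_comap_inf {N : ι → Submodule R M} (hindep : iSupIndep N)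
    (hsup : ⨆ i, N i = ⊤) {f : M →ₗ[R] M} (hf : ∀ i, N i ≤ (N i).comap f)
    {C : Submodule R M} (hC : C = ⨆ i, C ⊓ N i) :
    C.comap f = ⨆ i, C.comap f ⊓ N i := by
  refine le_antisymm (fun b hb => ?_) (iSup_le fun i => inf_le_left)
  obtain ⟨x, hxN, rfl⟩ := exists_sum_eq_of_mem_iSup (hsup ▸ mem_top : b ∈ ⨆ i, N i)
  obtain ⟨y, hyCN, hy⟩ := exists_sum_eq_of_mem_iSup (hC ▸ hb : f (∑ i, x i) ∈ ⨆ i, C ⊓ N i)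
  have hfx : ∀ i, f (x i) = y i := fun i =>
    (iSupIndep_iff_finsetSum_eq_imp_eq N).mp hindep Finset.univ _ _
      (fun i _ => ⟨hf i (hxN i), (hyCN i).2⟩) (by rw [hy, map_sum]) i (Finset.mem_univ i)
  exact sum_mem fun i _ => mem_iSup_of_mem i ⟨show f (x i) ∈ C from hfx i ▸ (hyCN i).1, hxN i⟩

end Submodule

theorem decomposition_lifts_from_radA_general
    (Λ : Type) [CommRing Λ] (p : Λ)
    (B : Type) [AddCommGroup B] [Module Λ B]
    (A : Submodule Λ B)
    (hsoc : LinearMap.ker (LinearMap.lsmul Λ B p) ≤ A)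
    (s : ℕ) (Bi : Fin s → Submodule Λ B)
    (hindep : iSupIndep Bi) (hsup : ⨆ i, Bi i = ⊤)
    (hrad : A.map (LinearMap.lsmul Λ B p)
      = ⨆ i, (A.map (LinearMap.lsmul Λ B p) ⊓ Bi i)) :
    A = ⨆ i, (A ⊓ Bi i) := by
  have hsplit := Submodule.comap_eq_iSup_comap_inf hindep hsup
    (f := LinearMap.lsmul Λ B p) (fun i _ hx => (Bi i).smul_mem p hx) hrad
  rwa [Submodule.comap_map_eq_self hsoc] at hsplit

/-- Over a commutative local uniserial ring `Λ` of length `n`, let `(B;A)` be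
a pair with `B` finitely generated, `p²A = 0` and `soc B ⊆ A`.  If `B = ⊕ᵢ Bᵢ` is a
decomposition (an independent family of submodules with sup `⊤`) such that
`rad A = ⊕ᵢ (rad A ∩ Bᵢ)`, then `A = ⊕ᵢ (A ∩ Bᵢ)`. -/
theorem decomposition_lifts_from_radA
    (Λ : Type) [CommRing Λ] [IsLocalRing Λ] (p : Λ) (n : ℕ)
    (hmax : IsLocalRing.maximalIdeal Λ = Ideal.span {p})
    (huni : ∀ I J : Ideal Λ, I ≤ J ∨ J ≤ I)
    (hlen : p ^ n = 0) (hlen' : p ^ (n - 1) ≠ 0)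
    (B : Type) [AddCommGroup B] [Module Λ B] [Module.Finite Λ B]
    (A : Submodule Λ B) (hp2A : ∀ a ∈ A, p ^ 2 • a = 0)
    (hsoc : LinearMap.ker (LinearMap.lsmul Λ B p) ≤ A)
    (s : ℕ) (Bi : Fin s → Submodule Λ B)
    (hindep : iSupIndep Bi) (hsup : ⨆ i, Bi i = ⊤)
    (hrad : A.map (LinearMap.lsmul Λ B p)
      = ⨆ i, (A.map (LinearMap.lsmul Λ B p) ⊓ Bi i)) :
    A = ⨆ i, (A ⊓ Bi i) :=
  decomposition_lifts_from_radA_general Λ p B A hsoc s Bi hindep hsup hrad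
end

section
/- Let Λ be a commutative local uniserial ring of length n with radical generator p. Every pair (B;A) with B finitely generated, p²A = 0, and soc B ⊆ A is a direct sum of pickets P^ℓ_m = (Λ/(p^ℓ); p^{ℓ−m}Λ/(p^ℓ)) with m ∈ {1,2} and m ≤ ℓ ≤ n. -/
/-!
Let `ℓ` be the exponent of `B`, i.e. `p ^ ℓ • B = 0` but `p ^ (ℓ - 1) • b ≠ 0` for some `b`. Such a
`b` spans a copy of `Λ ⧸ (p ^ ℓ)`, and every submodule maximal among those meeting `Λ ∙ b` trivially
is a complement of it: if `p • y` lies in `Λ ∙ b ⊔ C`, the `Λ ∙ b`-component is divisible by `p`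
(otherwise `p ^ (ℓ - 1) • b` would land in `C`), and then `y` itself lies in `Λ ∙ b ⊔ C` by
maximality.

It remains to choose `b` and the complement `C` so that `A` splits along `Λ ∙ b ⊕ C`, after which one
inducts on the length of `B`. If some `a ∈ A` has `0 ≠ p • a = p ^ (ℓ - 1) • b`, then
`a - p ^ (ℓ - 2) • b` is killed by `p`, hence lies in `A`, and `A ⊓ Λ ∙ b = Λ ∙ p ^ (ℓ - 2) • b`:
a picket `P^ℓ_2` splits off. Otherwise `p • A` meets `Λ ∙ b` trivially for any `b` of maximal
order, and a complement containing `p • A` pushes the `Λ ∙ b`-component of every element of `A`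
into the socle: a picket `P^ℓ_1` splits off.
-/

open Submodule
open scoped Pointwise

section Complements

variable {Λ M : Type*} [Ring Λ] [AddCommGroup M] [Module Λ M]

lemma Submodule.exists_le_maximal_disjoint {V C₀ : Submodule Λ M} (h : Disjoint C₀ V) :
    ∃ C, C₀ ≤ C ∧ Maximal (Disjoint · V) C := by
  obtain ⟨C, hC₀, hC⟩ := zorn_le_nonempty₀ {D : Submodule Λ M | Disjoint D V}
    (fun c hc hchain _ _ => ⟨sSup c, hchain.directedOn.disjoint_sSup_left.mpr fun _ hE => hc hE,
      fun _ => le_sSup⟩) C₀ h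
  exact ⟨C, hC₀, hC⟩

lemma Submodule.le_inf_sup_inf_of_isCompl {V C A : Submodule Λ M}
    (h : IsCompl V C) (hA : ∀ v ∈ V, ∀ c ∈ C, v + c ∈ A → v ∈ A) : A ≤ (A ⊓ V) ⊔ (A ⊓ C) := by
  intro a ha
  obtain ⟨v, hv, c, hc, rfl⟩ := mem_sup.mp (h.codisjoint.eq_top ▸ mem_top : a ∈ V ⊔ C)
  have hvA := hA v hv c hc ha
  exact mem_sup.mpr ⟨v, ⟨hvA, hv⟩, c, ⟨by simpa using sub_mem ha hvA, hc⟩, rfl⟩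

lemma Submodule.map_prodEquivOfIsCompl_symm {V C A : Submodule Λ M} (h : IsCompl V C) (hA : A ≤ (A ⊓ V) ⊔ (A ⊓ C)) :
    A.map ((prodEquivOfIsCompl V C h).symm : M →ₗ[Λ] V × C) =
      (A.comap V.subtype).prod (A.comap C.subtype) := by
  ext ⟨v, c⟩
  rw [mem_map_equiv, LinearEquiv.symm_symm, coe_prodEquivOfIsCompl', mem_prod, mem_comap,
    mem_comap, subtype_apply, subtype_apply]
  refine ⟨fun hvc => ?_, fun ⟨hv, hc⟩ => add_mem hv hc⟩
  obtain ⟨a₁, ⟨ha₁, ha₁V⟩, a₂, ⟨ha₂, ha₂C⟩, hsum⟩ := mem_sup.mp (hA hvc)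
  have : ((⟨a₁, ha₁V⟩, ⟨a₂, ha₂C⟩) : V × C) = (v, c) :=
    (prodEquivOfIsCompl V C h).injective hsum
  simp only [Prod.mk.injEq] at this
  exact this.1 ▸ this.2 ▸ ⟨ha₁, ha₂⟩

end Complements

section LocalRing

variable {Λ : Type*} [CommRing Λ] [IsLocalRing Λ] {p : Λ} {n : ℕ}

lemma exists_mul_eq_of_not_isUnit (hmax : IsLocalRing.maximalIdeal Λ = Ideal.span {p}) {x : Λ}
    (hx : ¬IsUnit x) : ∃ t, t * p = x := by
  rwa [← Ideal.mem_span_singleton', ← hmax, IsLocalRing.mem_maximalIdeal, mem_nonunits_iff]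

lemma eq_zero_or_exists_isUnit_mul_pow (hmax : IsLocalRing.maximalIdeal Λ = Ideal.span {p})
    (hlen : p ^ n = 0) (x : Λ) : x = 0 ∨ ∃ u k, IsUnit u ∧ x = u * p ^ k := by
  suffices h : ∀ j, ∀ x ∉ Ideal.span {p ^ j}, ∃ u k, IsUnit u ∧ x = u * p ^ k by
    by_cases hx : x = 0
    · exact .inl hx
    · exact .inr (h n x (by simpa [hlen] using hx))
  intro j
  induction j with
  | zero => simp
  | succ j ih =>
    intro x hx
    by_cases hxu : IsUnit x
    · exact ⟨x, 0, hxu, by simp⟩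
    obtain ⟨y, rfl⟩ := exists_mul_eq_of_not_isUnit hmax hxu
    have hy : y ∉ Ideal.span {p ^ j} := fun hy => hx <| by
      obtain ⟨c, rfl⟩ := Ideal.mem_span_singleton'.mp hy
      exact Ideal.mem_span_singleton'.mpr ⟨c, by ring⟩
    obtain ⟨u, k, hu, rfl⟩ := ih y hy
    exact ⟨u, k + 1, hu, by ring⟩

lemma exists_ideal_eq_span_pow (hmax : IsLocalRing.maximalIdeal Λ = Ideal.span {p})
    (hlen : p ^ n = 0) (I : Ideal Λ) : ∃ k ≤ n, I = Ideal.span {p ^ k} := by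
  classical
  have hex : ∃ k, p ^ k ∈ I := ⟨n, by simp [hlen]⟩
  refine ⟨Nat.find hex, Nat.find_le (by simp [hlen]), le_antisymm (fun x hx => ?_) ?_⟩
  · rcases eq_zero_or_exists_isUnit_mul_pow hmax hlen x with rfl | ⟨u, k, hu, rfl⟩
    · exact zero_mem _
    have hk : Nat.find hex ≤ k := Nat.find_min' hex <| by
      simpa [Ideal.unit_mul_mem_iff_mem _ hu] using hx
    exact Ideal.mem_span_singleton.mpr ⟨u * p ^ (k - Nat.find hex), by
      rw [mul_left_comm, ← pow_add, Nat.add_sub_cancel' hk]⟩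
  · exact (Ideal.span_singleton_le_iff_mem I).mpr (Nat.find_spec hex)

lemma finite_ideal (hmax : IsLocalRing.maximalIdeal Λ = Ideal.span {p}) (hlen : p ^ n = 0) :
    Finite (Ideal Λ) :=
  Finite.of_surjective (fun k : Fin (n + 1) => Ideal.span {p ^ (k : ℕ)}) fun I => by
    obtain ⟨k, hk, rfl⟩ := exists_ideal_eq_span_pow hmax hlen I
    exact ⟨⟨k, by omega⟩, rfl⟩

end LocalRing

section CyclicModule

variable {Λ : Type*} [CommRing Λ] {p : Λ} {n : ℕ} {M : Type*} [AddCommGroup M] [Module Λ M]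

lemma le_of_pow_smul_eq_zero {b : M} {ℓ k : ℕ} (hb : p ^ (ℓ - 1) • b ≠ 0) (h : p ^ k • b = 0) :
    ℓ ≤ k := by
  by_contra! hk
  exact hb <| by rw [← Nat.sub_add_cancel (by omega : k ≤ ℓ - 1), pow_add, mul_smul, h, smul_zero]

variable [IsLocalRing Λ] (hmax : IsLocalRing.maximalIdeal Λ = Ideal.span {p}) (hlen : p ^ n = 0)
include hmax hlen

lemma smul_mem_span_pow_smul {b : M} {ℓ j : ℕ} (hb : p ^ (ℓ - 1) • b ≠ 0) (hj : j ≤ ℓ) {r : Λ}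
    (h : p ^ j • r • b = 0) : r • b ∈ span Λ {p ^ (ℓ - j) • b} := by
  rcases eq_zero_or_exists_isUnit_mul_pow hmax hlen r with rfl | ⟨u, k, hu, rfl⟩
  · simp
  have hkj : ℓ ≤ k + j := le_of_pow_smul_eq_zero hb <| by
    rwa [smul_smul, ← mul_assoc, mul_comm _ u, mul_assoc, ← pow_add, mul_smul,
      hu.smul_eq_zero, add_comm] at h
  refine mem_span_singleton.mpr ⟨u * p ^ (k - (ℓ - j)), ?_⟩
  rw [smul_smul, mul_assoc, ← pow_add, Nat.sub_add_cancel (by omega)]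

lemma torsionOf_eq_span_pow {b : M} {ℓ : ℕ} (hb : p ^ (ℓ - 1) • b ≠ 0) (hbℓ : p ^ ℓ • b = 0) :
    Ideal.torsionOf Λ M b = Ideal.span {p ^ ℓ} := by
  ext r
  rw [Ideal.mem_torsionOf_iff]
  constructor
  · intro h
    rcases eq_zero_or_exists_isUnit_mul_pow hmax hlen r with rfl | ⟨u, k, hu, rfl⟩
    · exact zero_mem _
    have hk : ℓ ≤ k := le_of_pow_smul_eq_zero hb <| by rwa [mul_smul, hu.smul_eq_zero] at h
    exact Ideal.mem_span_singleton.mpr ⟨u * p ^ (k - ℓ), by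
      rw [mul_left_comm, ← pow_add, Nat.add_sub_cancel' hk]⟩
  · intro h
    obtain ⟨c, rfl⟩ := Ideal.mem_span_singleton'.mp h
    rw [mul_smul, hbℓ, smul_zero]

lemma mem_span_pow_smul_of_pow_smul_mem {b v : M} {j : ℕ} (hb : p ^ (ℓ - 1) • b ≠ 0)
    (hj : j ≤ ℓ) {C : Submodule Λ M} (hC : Disjoint C (span Λ {b})) (hv : v ∈ span Λ {b})
    (h : p ^ j • v ∈ C) : v ∈ span Λ {p ^ (ℓ - j) • b} := by
  obtain ⟨r, rfl⟩ := mem_span_singleton.mp hv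
  exact smul_mem_span_pow_smul hmax hlen hb hj <|
    disjoint_def.mp hC _ h (smul_mem _ _ hv)

end CyclicModule

section MaximalDisjoint

variable {Λ M : Type*} [CommRing Λ] {p : Λ} [AddCommGroup M] [Module Λ M]

lemma eq_top_of_smul_mem_imp_mem {n : ℕ} (hlen : p ^ n = 0) {U : Submodule Λ M}
    (h : ∀ y, p • y ∈ U → y ∈ U) : U = ⊤ := by
  have key : ∀ k y, p ^ k • y ∈ U → y ∈ U := by
    intro k
    induction k with
    | zero => simp
    | succ k ih => exact fun y hy => h y (ih _ (by rwa [smul_smul, ← pow_succ]))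
  exact eq_top_iff.mpr fun y _ => key n y (by simp [hlen])

variable [IsLocalRing Λ]

lemma mem_sup_of_smul_mem_of_maximal_disjoint (hmax : IsLocalRing.maximalIdeal Λ = Ideal.span {p})
    {V C : Submodule Λ M} (hC : Maximal (Disjoint · V) C) {y : M} (hy : p • y ∈ C) :
    y ∈ V ⊔ C := by
  by_contra hyVC
  suffices hdisj : Disjoint (C ⊔ span Λ {y}) V from
    hyVC <| mem_sup_right <| hC.le_of_ge hdisj le_sup_left <| mem_sup_right (mem_span_singleton_self y)
  rw [disjoint_def]
  intro z hz hzV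
  obtain ⟨c, hc, _, hy', rfl⟩ := mem_sup.mp hz
  obtain ⟨r, rfl⟩ := mem_span_singleton.mp hy'
  by_cases hr : IsUnit r
  · refine absurd ((smul_mem_iff_of_isUnit _ hr).mp ?_) hyVC
    simpa using sub_mem (mem_sup_left hzV) (mem_sup_right hc : c ∈ V ⊔ C)
  · obtain ⟨t, rfl⟩ := exists_mul_eq_of_not_isUnit hmax hr
    have hzC : c + (t * p) • y ∈ C := add_mem hc (by rw [mul_smul]; exact smul_mem _ _ hy)
    exact disjoint_def.mp hC.prop _ hzC hzV

lemma isCompl_span_of_maximal_disjoint {n : ℕ} (hmax : IsLocalRing.maximalIdeal Λ = Ideal.span {p})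
    (hlen : p ^ n = 0) {ℓ : ℕ} (hkill : ∀ x : M, p ^ ℓ • x = 0) {b : M}
    (hb : p ^ (ℓ - 1) • b ≠ 0) {C : Submodule Λ M} (hC : Maximal (Disjoint · (span Λ {b})) C) :
    IsCompl (span Λ {b}) C := by
  refine ⟨hC.prop.symm, codisjoint_iff.mpr <| eq_top_of_smul_mem_imp_mem hlen fun y hy => ?_⟩
  obtain ⟨_, hsb, c, hc, hsum⟩ := mem_sup.mp hy
  obtain ⟨s, rfl⟩ := mem_span_singleton.mp hsb
  have hℓ : 1 ≤ ℓ := Nat.pos_of_ne_zero fun h0 => hb (by simpa [h0] using hkill b)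
  have hsb0 : p ^ (ℓ - 1) • s • b = 0 := by
    have hmem : p ^ (ℓ - 1) • s • b = -(p ^ (ℓ - 1) • c) := by
      rw [eq_neg_iff_add_eq_zero, ← smul_add, hsum, smul_smul, ← pow_succ,
        Nat.sub_add_cancel hℓ, hkill]
    exact disjoint_def.mp hC.prop _ (hmem ▸ neg_mem (smul_mem _ _ hc))
      (smul_mem _ _ (smul_mem _ _ (mem_span_singleton_self b)))
  obtain ⟨t, rfl⟩ := exists_mul_eq_of_not_isUnit hmax fun hs =>
    hb (by rwa [smul_comm, hs.smul_eq_zero] at hsb0)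
  have hyt : y - t • b ∈ span Λ {b} ⊔ C :=
    mem_sup_of_smul_mem_of_maximal_disjoint hmax hC <| by
      rwa [smul_sub, smul_smul, mul_comm, ← hsum, add_sub_cancel_left]
  simpa using add_mem hyt (mem_sup_left (smul_mem _ t (mem_span_singleton_self b)))

end MaximalDisjoint

section PicketSummand

variable {Λ M : Type*} [CommRing Λ] [IsLocalRing Λ] [AddCommGroup M] [Module Λ M] {p : Λ} {n : ℕ}
  (hmax : IsLocalRing.maximalIdeal Λ = Ideal.span {p}) (hlen : p ^ n = 0)
  {A : Submodule Λ M} (hA2 : ∀ a ∈ A, p ^ 2 • a = 0) (hsoc : ∀ x : M, p • x = 0 → x ∈ A)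
  {ℓ : ℕ} (hkill : ∀ x : M, p ^ ℓ • x = 0)
include hmax hlen hA2 hsoc hkill

lemma exists_picket_summand_of_smul_eq_pow_smul {a y : M} (ha : a ∈ A)
    (hay : p • a = p ^ (ℓ - 1) • y) (hpa : p • a ≠ 0) :
    2 ≤ ℓ ∧ ∃ C, IsCompl (span Λ {y}) C ∧ A ⊓ span Λ {y} = span Λ {p ^ (ℓ - 2) • y} ∧
      A ≤ (A ⊓ span Λ {y}) ⊔ (A ⊓ C) := by
  have hℓ : 2 ≤ ℓ := by
    by_contra! hℓ
    exact hpa <| by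
      rw [← pow_one p, ← Nat.sub_add_cancel (by omega : ℓ ≤ 1), pow_add, mul_smul, hkill, smul_zero]
  have hy : p ^ (ℓ - 1) • y ≠ 0 := hay ▸ hpa
  have hspan : span Λ {p ^ (ℓ - 2) • y} ≤ A := by
    rw [span_singleton_le_iff_mem]
    have hker : a - p ^ (ℓ - 2) • y ∈ A := hsoc _ <| by
      rw [smul_sub, smul_smul, ← pow_succ', show ℓ - 2 + 1 = ℓ - 1 by omega, hay, sub_self]
    simpa using sub_mem ha hker
  obtain ⟨C, -, hC⟩ := exists_le_maximal_disjoint (disjoint_bot_left (a := span Λ {y}))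
  have hcompl := isCompl_span_of_maximal_disjoint hmax hlen hkill hy hC
  refine ⟨hℓ, C, hcompl, le_antisymm ?_ ?_, ?_⟩
  · rintro z ⟨hzA, hzy⟩
    exact mem_span_pow_smul_of_pow_smul_mem hmax hlen hy hℓ hC.prop hzy
      ((hA2 z hzA).symm ▸ zero_mem C)
  · exact le_inf hspan (span_le.mpr <| by simpa using smul_mem _ _ (mem_span_singleton_self y))
  refine le_inf_sup_inf_of_isCompl hcompl fun v hv c hc hvc => hspan ?_
  refine mem_span_pow_smul_of_pow_smul_mem hmax hlen hy hℓ hC.prop hv ?_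
  have : p ^ 2 • v = -(p ^ 2 • c) := by rw [eq_neg_iff_add_eq_zero, ← smul_add, hA2 _ hvc]
  exact this ▸ neg_mem (smul_mem _ _ hc)

lemma exists_picket_summand_of_forall_smul_eq_pow_smul {b : M} (hb : p ^ (ℓ - 1) • b ≠ 0)
    (hA : ∀ a ∈ A, ∀ y, p • a = p ^ (ℓ - 1) • y → p • a = 0) :
    ∃ C, IsCompl (span Λ {b}) C ∧ A ⊓ span Λ {b} = span Λ {p ^ (ℓ - 1) • b} ∧
      A ≤ (A ⊓ span Λ {b}) ⊔ (A ⊓ C) := by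
  have hℓ : 1 ≤ ℓ := Nat.pos_of_ne_zero fun h0 => hb (by simpa [h0] using hkill b)
  have hdisj : Disjoint (p • A) (span Λ {b}) := by
    refine disjoint_def.mpr fun z hz hzb => ?_
    obtain ⟨a, ha, rfl⟩ := mem_smul_pointwise_iff_exists _ _ _ |>.mp hz
    obtain ⟨t, ht⟩ := mem_span_singleton.mp <|
      mem_span_pow_smul_of_pow_smul_mem hmax hlen hb hℓ disjoint_bot_left hzb
        (by rw [pow_one, smul_smul, ← sq, hA2 a ha]; exact zero_mem ⊥)
    exact hA a ha (t • b) (by rw [← ht, smul_comm])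
  obtain ⟨C, hpAC, hC⟩ := exists_le_maximal_disjoint hdisj
  have hcompl := isCompl_span_of_maximal_disjoint hmax hlen hkill hb hC
  have hspan : span Λ {p ^ (ℓ - 1) • b} ≤ A := by
    rw [span_singleton_le_iff_mem]
    exact hsoc _ (by rw [smul_smul, ← pow_succ', Nat.sub_add_cancel hℓ, hkill])
  have hpA : ∀ a ∈ A, p • a ∈ C := fun a ha => hpAC (smul_mem_pointwise_smul _ _ _ ha)
  refine ⟨C, hcompl, le_antisymm ?_ ?_, ?_⟩
  · rintro z ⟨hzA, hzb⟩
    exact mem_span_pow_smul_of_pow_smul_mem hmax hlen hb hℓ hC.prop hzb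
      (by simpa using hpA z hzA)
  · exact le_inf hspan (span_le.mpr <| by simpa using smul_mem _ _ (mem_span_singleton_self b))
  refine le_inf_sup_inf_of_isCompl hcompl fun v hv c hc hvc => hspan ?_
  refine mem_span_pow_smul_of_pow_smul_mem hmax hlen hb hℓ hC.prop hv ?_
  simpa [smul_add] using sub_mem (hpA _ hvc) (smul_mem C p hc)

lemma exists_picket_summand {b₀ : M} (hb₀ : p ^ (ℓ - 1) • b₀ ≠ 0) :
    ∃ m b C, 1 ≤ m ∧ m ≤ 2 ∧ m ≤ ℓ ∧ p ^ (ℓ - 1) • b ≠ 0 ∧ IsCompl (span Λ {b}) C ∧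
      A ⊓ span Λ {b} = span Λ {p ^ (ℓ - m) • b} ∧ A ≤ (A ⊓ span Λ {b}) ⊔ (A ⊓ C) := by
  by_cases h : ∃ a ∈ A, ∃ y, p • a = p ^ (ℓ - 1) • y ∧ p • a ≠ 0
  · obtain ⟨a, ha, y, hay, hpa⟩ := h
    obtain ⟨hℓ, C, hC⟩ := exists_picket_summand_of_smul_eq_pow_smul hmax hlen hA2 hsoc hkill ha hay hpa
    exact ⟨2, y, C, by omega, le_rfl, hℓ, hay ▸ hpa, hC⟩
  · push Not at h
    obtain ⟨C, hC⟩ := exists_picket_summand_of_forall_smul_eq_pow_smul hmax hlen hA2 hsoc hkill hb₀ h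
    have hℓ : 1 ≤ ℓ := Nat.pos_of_ne_zero fun h0 => hb₀ (by simpa [h0] using hkill b₀)
    exact ⟨1, b₀, C, le_rfl, by omega, hℓ, hb₀, hC⟩

end PicketSummand

section Decomposition

variable {Λ : Type*} [CommRing Λ] {M M₁ M₂ : Type*} [AddCommGroup M] [Module Λ M]
  [AddCommGroup M₁] [Module Λ M₁] [AddCommGroup M₂] [Module Λ M₂]

/-- The submodule `p^{ℓ-m}Λ/(p^ℓ)` of the picket `P^ℓ_m`. -/
def picketSubmodule (p : Λ) (ℓ m : ℕ) : Submodule Λ (Λ ⧸ Ideal.span {p ^ ℓ}) :=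
  span Λ {Ideal.Quotient.mk (Ideal.span {p ^ ℓ}) (p ^ (ℓ - m))}

def HasPicketDecomposition (p : Λ) (n : ℕ) (A : Submodule Λ M) : Prop :=
  ∃ (s : ℕ) (ℓ m : Fin s → ℕ), (∀ i, 1 ≤ m i ∧ m i ≤ 2 ∧ m i ≤ ℓ i ∧ ℓ i ≤ n) ∧
    ∃ e : M ≃ₗ[Λ] ((i : Fin s) → Λ ⧸ Ideal.span {p ^ ℓ i}),
      A.map (e : M →ₗ[Λ] _) = pi Set.univ fun i => picketSubmodule p (ℓ i) (m i)

variable {p : Λ} {n : ℕ}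

lemma HasPicketDecomposition.of_subsingleton [Subsingleton M] (A : Submodule Λ M) :
    HasPicketDecomposition p n A :=
  ⟨0, Fin.elim0, Fin.elim0, fun i => i.elim0, LinearEquiv.ofSubsingleton _ _, Subsingleton.elim _ _⟩

lemma HasPicketDecomposition.of_map {A : Submodule Λ M₁} (e : M₁ ≃ₗ[Λ] M₂)
    (h : HasPicketDecomposition p n (A.map (e : M₁ →ₗ[Λ] M₂))) : HasPicketDecomposition p n A := by
  obtain ⟨s, ℓ, m, hbounds, e', he'⟩ := h
  refine ⟨s, ℓ, m, hbounds, e.trans e', ?_⟩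
  rw [LinearEquiv.coe_trans, Submodule.map_comp, he']

lemma HasPicketDecomposition.prod {A₁ : Submodule Λ M₁} {A₂ : Submodule Λ M₂} {ℓ m : ℕ}
    (hbounds : 1 ≤ m ∧ m ≤ 2 ∧ m ≤ ℓ ∧ ℓ ≤ n) (e₁ : M₁ ≃ₗ[Λ] Λ ⧸ Ideal.span {p ^ ℓ})
    (he₁ : A₁.map (e₁ : M₁ →ₗ[Λ] _) = picketSubmodule p ℓ m)
    (h₂ : HasPicketDecomposition p n A₂) : HasPicketDecomposition p n (A₁.prod A₂) := by
  obtain ⟨s, ℓ', m', hbounds', e₂, he₂⟩ := h₂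
  let L : Fin (s + 1) → ℕ := Fin.cons ℓ ℓ'
  refine ⟨s + 1, L, Fin.cons m m', Fin.cases hbounds hbounds',
    (e₁.prodCongr e₂).trans (Fin.consLinearEquiv Λ fun i => Λ ⧸ Ideal.span {p ^ L i}), ?_⟩
  have h₁ : ∀ y, e₁.symm y ∈ A₁ ↔ y ∈ picketSubmodule p ℓ m := fun y => by
    rw [← he₁, mem_map_equiv]
  have h₂ : ∀ y, e₂.symm y ∈ A₂ ↔ ∀ i, y i ∈ picketSubmodule p (ℓ' i) (m' i) := fun y => by
    rw [← mem_map_equiv, he₂, mem_pi]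
    simp
  ext x
  simp only [mem_map_equiv, mem_pi, Set.mem_univ, true_implies, Fin.forall_fin_succ]
  exact and_congr (h₁ _) (h₂ _)

variable [IsLocalRing Λ]

lemma exists_linearEquiv_map_eq_picketSubmodule
    (hmax : IsLocalRing.maximalIdeal Λ = Ideal.span {p}) (hlen : p ^ n = 0)
    {A : Submodule Λ M} {b : M} {ℓ m : ℕ} (hb : p ^ (ℓ - 1) • b ≠ 0) (hbℓ : p ^ ℓ • b = 0)
    (hAb : A ⊓ span Λ {b} = span Λ {p ^ (ℓ - m) • b}) :
    ∃ e : span Λ {b} ≃ₗ[Λ] Λ ⧸ Ideal.span {p ^ ℓ},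
      (A.comap (span Λ {b}).subtype).map (e : span Λ {b} →ₗ[Λ] _) = picketSubmodule p ℓ m := by
  let e := (quotEquivOfEq _ _ (torsionOf_eq_span_pow hmax hlen hb hbℓ).symm).trans
    (Ideal.quotTorsionOfEquivSpanSingleton Λ M b)
  refine ⟨e.symm, (map_symm_eq_iff e).mpr <| map_injective_of_injective (injective_subtype _) ?_⟩
  rw [map_comap_subtype, inf_comm, hAb, picketSubmodule, ← map_comp, map_span, Set.image_singleton]
  rfl

lemma HasPicketDecomposition.of_isCompl
    (hmax : IsLocalRing.maximalIdeal Λ = Ideal.span {p}) (hlen : p ^ n = 0)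
    {A C : Submodule Λ M} {b : M} {ℓ m : ℕ} (hbounds : 1 ≤ m ∧ m ≤ 2 ∧ m ≤ ℓ ∧ ℓ ≤ n)
    (hb : p ^ (ℓ - 1) • b ≠ 0) (hbℓ : p ^ ℓ • b = 0) (hC : IsCompl (span Λ {b}) C)
    (hAb : A ⊓ span Λ {b} = span Λ {p ^ (ℓ - m) • b}) (hA : A ≤ (A ⊓ span Λ {b}) ⊔ (A ⊓ C))
    (h : HasPicketDecomposition p n (A.comap C.subtype)) : HasPicketDecomposition p n A := by
  obtain ⟨e₁, he₁⟩ := exists_linearEquiv_map_eq_picketSubmodule hmax hlen hb hbℓ hAb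
  refine .of_map (prodEquivOfIsCompl _ _ hC).symm ?_
  rw [map_prodEquivOfIsCompl_symm hC hA]
  exact .prod hbounds e₁ he₁ h

theorem hasPicketDecomposition (hmax : IsLocalRing.maximalIdeal Λ = Ideal.span {p})
    (hlen : p ^ n = 0) [IsArtinian Λ M] [IsNoetherian Λ M] (A : Submodule Λ M)
    (hA2 : ∀ a ∈ A, p ^ 2 • a = 0) (hsoc : ∀ x : M, p • x = 0 → x ∈ A) :
    HasPicketDecomposition p n A := by
  induction hk : Module.length Λ M using WellFoundedLT.induction generalizing M with
  | ind k ih =>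
  rcases subsingleton_or_nontrivial M with hM | hM
  · exact .of_subsingleton A
  classical
  have hex : ∃ ℓ, ∀ x : M, p ^ ℓ • x = 0 := ⟨n, by simp [hlen]⟩
  have hkill := Nat.find_spec hex
  obtain ⟨b₀, hb₀⟩ : ∃ b₀ : M, p ^ (Nat.find hex - 1) • b₀ ≠ 0 := by
    obtain ⟨x, hx⟩ := exists_ne (0 : M)
    have hℓ : Nat.find hex ≠ 0 := fun h0 => hx (by simpa [h0] using hkill x)
    simpa using Nat.find_min hex (by omega : Nat.find hex - 1 < Nat.find hex)
  obtain ⟨m, b, C, hm1, hm2, hmℓ, hb, hC, hAb, hA⟩ :=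
    exists_picket_summand hmax hlen hA2 hsoc hkill hb₀
  refine .of_isCompl hmax hlen ⟨hm1, hm2, hmℓ, Nat.find_min' hex (by simp [hlen])⟩ hb (hkill b)
    hC hAb hA (ih _ ?_ (A.comap C.subtype) (fun a ha => Subtype.ext (hA2 _ ha))
      (fun x hx => hsoc _ (congrArg Subtype.val hx)) rfl)
  have : Nontrivial (span Λ {b}) := nontrivial_span_singleton fun h0 => hb (by simp [h0])
  have hsplit : k = Module.length Λ (span Λ {b}) + Module.length Λ C := by
    rw [← hk, ← (prodEquivOfIsCompl _ _ hC).length_eq, Module.length_prod]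
  exact hsplit ▸ ENat.lt_add_left Module.length_ne_top Module.length_pos

end Decomposition

theorem picket_decomposition_socle_case_general
    (Λ : Type) [CommRing Λ] [IsLocalRing Λ] (p : Λ) (n : ℕ)
    (hmax : IsLocalRing.maximalIdeal Λ = Ideal.span {p})
    (hlen : p ^ n = 0)
    (B : Type) [AddCommGroup B] [Module Λ B] [Module.Finite Λ B]
    (A : Submodule Λ B) (hp2A : ∀ a ∈ A, p ^ 2 • a = 0)
    (hsoc : LinearMap.ker (LinearMap.lsmul Λ B p) ≤ A) :
    ∃ (s : ℕ) (ℓ : Fin s → ℕ) (m : Fin s → ℕ),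
      (∀ i, 1 ≤ m i ∧ m i ≤ 2 ∧ m i ≤ ℓ i ∧ ℓ i ≤ n) ∧
      ∃ e : B ≃ₗ[Λ] ((i : Fin s) → Λ ⧸ Ideal.span {p ^ ℓ i}),
        A.map (e : B →ₗ[Λ] ((i : Fin s) → Λ ⧸ Ideal.span {p ^ ℓ i}))
          = Submodule.pi Set.univ
              (fun i => Submodule.span Λ
                {Ideal.Quotient.mk (Ideal.span {p ^ ℓ i}) (p ^ (ℓ i - m i))}) := by
  have : Finite (Ideal Λ) := finite_ideal hmax hlen
  have : IsArtinianRing Λ := Finite.to_wellFoundedLT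
  exact hasPicketDecomposition hmax hlen A hp2A fun x hx => hsoc hx

/-- Over a commutative local uniserial ring `Λ` of length `n`, every pair
`(B;A)` with `B` finitely generated, `p²A = 0` and `soc B ⊆ A` is a direct sum of
pickets `P^ℓ_m = (Λ/(p^ℓ); span (p^{ℓ−m}))` with `m ∈ {1,2}` and `m ≤ ℓ ≤ n`. -/
theorem picket_decomposition_socle_case
    (Λ : Type) [CommRing Λ] [IsLocalRing Λ] (p : Λ) (n : ℕ)
    (hmax : IsLocalRing.maximalIdeal Λ = Ideal.span {p})
    (huni : ∀ I J : Ideal Λ, I ≤ J ∨ J ≤ I)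
    (hlen : p ^ n = 0) (hlen' : p ^ (n - 1) ≠ 0)
    (B : Type) [AddCommGroup B] [Module Λ B] [Module.Finite Λ B]
    (A : Submodule Λ B) (hp2A : ∀ a ∈ A, p ^ 2 • a = 0)
    (hsoc : LinearMap.ker (LinearMap.lsmul Λ B p) ≤ A) :
    ∃ (s : ℕ) (ℓ : Fin s → ℕ) (m : Fin s → ℕ),
      (∀ i, 1 ≤ m i ∧ m i ≤ 2 ∧ m i ≤ ℓ i ∧ ℓ i ≤ n) ∧
      ∃ e : B ≃ₗ[Λ] ((i : Fin s) → Λ ⧸ Ideal.span {p ^ ℓ i}),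
        A.map (e : B →ₗ[Λ] ((i : Fin s) → Λ ⧸ Ideal.span {p ^ ℓ i}))
          = Submodule.pi Set.univ
              (fun i => Submodule.span Λ
                {Ideal.Quotient.mk (Ideal.span {p ^ ℓ i}) (p ^ (ℓ i - m i))}) :=
  picket_decomposition_socle_case_general Λ p n hmax hlen B A hp2A hsoc
end

section
/- Let k be a field and 𝒫_n the poset {1 < 2 < … < n−1} ⊔ {1'} ⊔ {1''} consisting of a chain of length n−1 and two incomparable extra points. Every indecomposable k-linear representation V of 𝒫_n (a vector space V⁰ with subspaces V^i, i ∈ 𝒫_n, satisfying V^i ⊆ V^j for i ≤ j) has total space V⁰ of dimension at most 2. -/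
/-!
A representation is decomposable as soon as some projection onto a nonzero proper subspace
leaves all its subspaces invariant. For a vector `x` and a subspace `T ∌ x` such that each subspace
of the representation contains `x` or lies in `T`, a functional `φ` with `φ x = 1` and `T ≤ ker φ`
gives such a projection `y ↦ φ y • x`; since `V^1 ⊇ ⋯ ⊇ V^{n-1}` is a chain, `T` can be taken to be
a member of it. This settles the cases `V' ∩ V'' ≠ 0` and `V' + V'' ≠ V⁰`.

If `V⁰ = V' ⊕ V''`, pick `v = a + b` (`a ∈ V'`, `b ∈ V''`) in the smallest nonzero member of the
chain. Either the line `k a` splits off, or some member `K` of the chain contains `v` but not `a`;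
then a functional vanishing on `K` with `φ a = 1` splits off the plane spanned by `a` and `b`.
-/

open Module Submodule

section FiniteChain

variable {ι α : Type*} [LinearOrder ι] [Finite ι] [Preorder α] {W : ι → α}

theorem Antitone.forall_or_exists_forall_or_le (hW : Antitone W) (P : ι → Prop) :
    (∀ i, P i) ∨ ∃ m, ¬ P m ∧ ∀ i, P i ∨ W i ≤ W m := by
  by_contra! ⟨⟨i, hi⟩, hnone⟩
  obtain ⟨m, hm, hmin⟩ := Set.exists_min_image {i | ¬ P i} id (Set.toFinite _) ⟨i, hi⟩
  obtain ⟨j, hj, hjm⟩ := hnone m hm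
  exact hjm (hW (hmin j hj))

theorem Antitone.forall_or_exists_forall_or_ge (hW : Antitone W) (P : ι → Prop) :
    (∀ i, P i) ∨ ∃ m, ¬ P m ∧ ∀ i, P i ∨ W m ≤ W i :=
  hW.dual.forall_or_exists_forall_or_le (P ∘ OrderDual.ofDual)

end FiniteChain

section Module

variable {ι R M : Type*} [Ring R] [AddCommGroup M] [Module R M] {U S : Submodule R M}
  {f : Module.End R M}

theorem Module.End.mem_invtSubmodule_of_le_ker (h : S ≤ LinearMap.ker f) :
    S ∈ f.invtSubmodule :=
  fun x hx => by simp [LinearMap.mem_ker.1 (h hx)]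

namespace LinearMap.IsProj

theorem mem_invtSubmodule_of_le (hf : IsProj U f) (hUS : U ≤ S) : S ∈ f.invtSubmodule :=
  fun x _ => hUS (hf.map_mem x)

theorem eq_inf_sup_inf_ker_s10 (hf : IsProj U f) (hS : S ∈ f.invtSubmodule) :
    S = S ⊓ U ⊔ S ⊓ ker f := by
  refine le_antisymm (fun x hx => ?_) (sup_le inf_le_left inf_le_left)
  have hfx : f x ∈ S ⊓ U := ⟨hS hx, hf.map_mem x⟩
  have hker : x - f x ∈ S ⊓ ker f :=
    ⟨S.sub_mem hx hfx.1, by simp [hf.map_id _ (hf.map_mem x)]⟩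
  simpa using add_mem (mem_sup_left hfx) (mem_sup_right hker)

end LinearMap.IsProj

variable [LinearOrder ι] [Finite ι] {W : ι → Submodule R M}

theorem Antitone.exists_forall_mem_or_le_of_ne_zero (hW : Antitone W) {x : M} (hx : x ≠ 0) :
    ∃ T : Submodule R M, x ∉ T ∧ ∀ i, x ∈ W i ∨ W i ≤ T := by
  rcases hW.forall_or_exists_forall_or_le (fun i => x ∈ W i) with hall | ⟨m, hm, hmax⟩
  · exact ⟨⊥, by simpa using hx, fun i => .inl (hall i)⟩
  · exact ⟨W m, hm, hmax⟩

theorem Antitone.exists_forall_mem_or_le_of_ne_top (hW : Antitone W) {T : Submodule R M}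
    (hT : T ≠ ⊤) : ∃ x ∉ T, ∀ i, x ∈ W i ∨ W i ≤ T := by
  rcases hW.forall_or_exists_forall_or_ge (fun i => W i ≤ T) with hall | ⟨m, hm, hmin⟩
  · obtain ⟨x, hx⟩ : ∃ x, x ∉ T := by simpa [eq_top_iff'] using hT
    exact ⟨x, hx, fun i => .inr (hall i)⟩
  · obtain ⟨x, hxm, hxT⟩ := SetLike.not_le_iff_exists.1 hm
    exact ⟨x, hxT, fun i => (hmin i).symm.imp (· hxm) id⟩

end Module

section VectorSpace

variable {k V : Type*} [Field k] [AddCommGroup V] [Module k V]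

theorem Submodule.exists_dual_eq_one_of_notMem {T : Submodule k V} {x : V} (hx : x ∉ T) :
    ∃ φ : Dual k V, φ x = 1 ∧ T ≤ LinearMap.ker φ := by
  obtain ⟨φ, hφx, hφT⟩ := T.exists_dual_map_eq_bot_of_notMem hx inferInstance
  refine ⟨(φ x)⁻¹ • φ, inv_mul_cancel₀ hφx, fun y hy => ?_⟩
  have : φ y = 0 := (mem_bot k).1 (hφT ▸ mem_map_of_mem hy)
  simp [this]

theorem exists_isProj_span_singleton {T : Submodule k V} {x : V} (hx : x ∉ T) :
    ∃ f : Module.End k V, LinearMap.IsProj (k ∙ x) f ∧ T ≤ LinearMap.ker f := by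
  obtain ⟨φ, hφx, hφT⟩ := exists_dual_eq_one_of_notMem hx
  refine ⟨φ.smulRight x, ⟨fun y => smul_mem _ _ (mem_span_singleton_self x), ?_⟩,
    fun y hy => by simp [LinearMap.mem_ker.1 (hφT hy)]⟩
  rintro y hy
  obtain ⟨c, rfl⟩ := mem_span_singleton.1 hy
  simp [hφx]

theorem exists_isProj_span_pair {V' V'' K : Submodule k V} (h : IsCompl V' V'') {a b : V}
    (ha : a ∈ V') (hb : b ∈ V'') (hK : a + b ∈ K) (haK : a ∉ K) :
    ∃ f : Module.End k V, LinearMap.IsProj (span k {a, b}) f ∧ V' ∈ f.invtSubmodule ∧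
      V'' ∈ f.invtSubmodule ∧ ∀ S : Submodule k V, a + b ∈ S → S ≤ K → S ∈ f.invtSubmodule := by
  obtain ⟨φ, hφa, hφK⟩ := exists_dual_eq_one_of_notMem haK
  have hφb : φ b = -1 := by
    have : φ (a + b) = 0 := hφK hK
    rw [map_add, hφa] at this
    linear_combination this
  set p := V'.projection V'' h
  -- `f` is `y ↦ φ y • a` on `V'` and `y ↦ -φ y • b` on `V''`, and maps `ker φ` into `k ∙ (a + b)`.
  set f : Module.End k V := (φ ∘ₗ p).smulRight (a + b) - φ.smulRight b
  have hf : ∀ y, f y = φ (p y) • (a + b) - φ y • b := fun y => rfl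
  have hfa : f a = a := by simp [hf, p, projection_apply_of_mem_left h ha, hφa]
  have hfb : f b = b := by simp [hf, p, projection_apply_of_mem_right h hb, hφb]
  refine ⟨f, ⟨fun y => ?_, fun y hy => ?_⟩, fun y hy => ?_, fun y hy => ?_,
    fun S hS hSK y hy => ?_⟩
  · rw [hf]
    refine sub_mem (smul_mem _ _ (add_mem ?_ ?_)) (smul_mem _ _ ?_) <;>
      exact subset_span (by simp)
  · obtain ⟨c, d, rfl⟩ := mem_span_pair.1 hy
    simp [hfa, hfb]
  · rw [mem_comap, hf, projection_apply_of_mem_left h hy, smul_add, add_sub_cancel_right]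
    exact smul_mem _ _ ha
  · rw [mem_comap, hf, projection_apply_of_mem_right h hy, map_zero, zero_smul, zero_sub]
    exact neg_mem (smul_mem _ _ hb)
  · rw [mem_comap, hf, LinearMap.mem_ker.1 (hφK (hSK hy)), zero_smul, sub_zero]
    exact smul_mem _ _ hS

end VectorSpace

section Representation

variable {ι k V : Type*} [Field k] [AddCommGroup V] [Module k V]
  (W : ι → Submodule k V) (V' V'' : Submodule k V)

def IsDecomposable : Prop :=
  ∃ U U' : Submodule k V, U ≠ ⊥ ∧ U' ≠ ⊥ ∧ IsCompl U U' ∧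
    (∀ i, W i = (W i ⊓ U) ⊔ (W i ⊓ U')) ∧
    V' = (V' ⊓ U) ⊔ (V' ⊓ U') ∧ V'' = (V'' ⊓ U) ⊔ (V'' ⊓ U')

variable {W V' V''}

theorem isDecomposable_of_isProj {U : Submodule k V} {f : Module.End k V}
    (hf : LinearMap.IsProj U f) (hU₀ : U ≠ ⊥) (hU : U ≠ ⊤)
    (hW : ∀ i, W i ∈ f.invtSubmodule) (hV' : V' ∈ f.invtSubmodule)
    (hV'' : V'' ∈ f.invtSubmodule) : IsDecomposable W V' V'' := by
  have hker : LinearMap.ker f ≠ ⊥ := fun h => hU (eq_top_of_isCompl_bot (h ▸ hf.isCompl))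
  exact ⟨U, _, hU₀, hker, hf.isCompl, fun i => hf.eq_inf_sup_inf_ker_s10 (hW i),
    hf.eq_inf_sup_inf_ker_s10 hV', hf.eq_inf_sup_inf_ker_s10 hV''⟩

theorem isDecomposable_of_notMem (hV : 1 < finrank k V) {x : V} {T : Submodule k V}
    (hx : x ∉ T) (hW : ∀ i, x ∈ W i ∨ W i ≤ T) (hV' : x ∈ V' ∨ V' ≤ T)
    (hV'' : x ∈ V'' ∨ V'' ≤ T) : IsDecomposable W V' V'' := by
  obtain ⟨f, hf, hTf⟩ := exists_isProj_span_singleton hx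
  have hx₀ : x ≠ 0 := fun h => hx (h ▸ T.zero_mem)
  have hinvt : ∀ S : Submodule k V, x ∈ S ∨ S ≤ T → S ∈ f.invtSubmodule := by
    rintro S (hS | hS)
    · exact hf.mem_invtSubmodule_of_le ((span_singleton_le_iff_mem x S).2 hS)
    · exact Module.End.mem_invtSubmodule_of_le_ker (hS.trans hTf)
  have hspan : k ∙ x ≠ ⊤ :=
    (lt_top_of_finrank_lt_finrank (by rwa [finrank_span_singleton hx₀])).ne
  exact isDecomposable_of_isProj hf (by simpa using hx₀) hspan (fun i => hinvt _ (hW i))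
    (hinvt _ hV') (hinvt _ hV'')

variable [LinearOrder ι] [Finite ι]

theorem Antitone.isDecomposable_of_not_isCompl (hW : Antitone W) (h : ¬ IsCompl V' V'')
    (hV : 1 < finrank k V) : IsDecomposable W V' V'' := by
  by_cases hinf : V' ⊓ V'' = ⊥
  · have hsup : V' ⊔ V'' ≠ ⊤ := fun hsup => h ⟨disjoint_iff.2 hinf, codisjoint_iff.2 hsup⟩
    obtain ⟨x, hx, hxW⟩ := hW.exists_forall_mem_or_le_of_ne_top hsup
    exact isDecomposable_of_notMem hV hx hxW (.inr le_sup_left) (.inr le_sup_right)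
  · obtain ⟨x, ⟨hx', hx''⟩, hx₀⟩ := exists_mem_ne_zero_of_ne_bot hinf
    obtain ⟨T, hx, hxW⟩ := hW.exists_forall_mem_or_le_of_ne_zero hx₀
    exact isDecomposable_of_notMem hV hx hxW (.inl hx') (.inl hx'')

theorem Antitone.isDecomposable_of_isCompl_of_forall_mem (hW : Antitone W)
    (h : IsCompl V' V'') (hV : 2 < finrank k V) {a b : V} (ha : a ∈ V') (hb : b ∈ V'')
    (ha'' : a ∉ V'') (hvW : ∀ i, a + b ∈ W i ∨ W i = ⊥) : IsDecomposable W V' V'' := by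
  rcases hW.forall_or_exists_forall_or_le (fun i => a ∈ W i ∨ W i = ⊥) with hall | ⟨m, hm, hmax⟩
  · exact isDecomposable_of_notMem (by omega) ha''
      (fun i => (hall i).imp_right fun hi => hi.le.trans bot_le) (.inl ha) (.inr le_rfl)
  rw [not_or] at hm
  obtain ⟨f, hf, hV'f, hV''f, hKf⟩ :=
    exists_isProj_span_pair h ha hb ((hvW m).resolve_right hm.2) hm.1
  have ha₀ : a ≠ 0 := fun h => ha'' (h ▸ V''.zero_mem)
  have hspan : span k {a, b} ≠ ⊤ := by
    classical
    exact (span_lt_top_of_card_lt_finrank (by simpa using Finset.card_le_two.trans_lt hV)).ne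
  refine isDecomposable_of_isProj hf (fun h => ha₀ ((mem_bot k).1 (h ▸ subset_span (by simp))))
    hspan (fun i => ?_) hV'f hV''f
  obtain hi | hvi := (hvW i).symm
  · rw [hi]
    exact Module.End.invtSubmodule.bot_mem f
  rcases hmax i with (hai | hi) | hle
  · have hbi : b ∈ W i := by simpa using sub_mem hvi hai
    exact hf.mem_invtSubmodule_of_le (span_le.2 (Set.pair_subset hai hbi))
  · rw [hi]
    exact Module.End.invtSubmodule.bot_mem f
  · exact hKf _ hvi hle

theorem Antitone.isDecomposable_of_isCompl (hW : Antitone W) (h : IsCompl V' V'')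
    (hV : 2 < finrank k V) : IsDecomposable W V' V'' := by
  have : Nontrivial V := nontrivial_of_finrank_pos (R := k) (by omega)
  obtain ⟨v, hv, hvW⟩ := hW.exists_forall_mem_or_le_of_ne_top (T := ⊥) bot_ne_top
  simp only [le_bot_iff] at hvW
  by_cases hv'' : v ∈ V''
  · have hv' : v ∉ V' := fun hv' => hv (h.inf_eq_bot ▸ mem_inf.2 ⟨hv', hv''⟩)
    exact isDecomposable_of_notMem (by omega) hv'
      (fun i => (hvW i).imp_right fun hi => hi.le.trans bot_le) (.inr le_rfl) (.inl hv'')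
  obtain ⟨a, ha, b, hb, rfl⟩ := mem_sup.1 (h.sup_eq_top ▸ mem_top : v ∈ V' ⊔ V'')
  exact hW.isDecomposable_of_isCompl_of_forall_mem h hV ha hb
    (fun ha'' => hv'' (add_mem ha'' hb)) hvW

end Representation

theorem indecomposable_poset_rep_dim_le_two_general
    (k : Type) [Field k] (n : ℕ)
    (V : Type) [AddCommGroup V] [Module k V]
    (W : Fin (n - 1) → Submodule k V)
    (hW : ∀ i j : Fin (n - 1), i ≤ j → W j ≤ W i)
    (V' V'' : Submodule k V)
    (hind : ¬ ∃ U U' : Submodule k V, U ≠ ⊥ ∧ U' ≠ ⊥ ∧ IsCompl U U' ∧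
      (∀ i, W i = (W i ⊓ U) ⊔ (W i ⊓ U')) ∧
      V' = (V' ⊓ U) ⊔ (V' ⊓ U') ∧ V'' = (V'' ⊓ U) ⊔ (V'' ⊓ U')) :
    Module.finrank k V ≤ 2 := by
  by_contra! hV
  by_cases h : IsCompl V' V''
  · exact hind (Antitone.isDecomposable_of_isCompl hW h hV)
  · exact hind (Antitone.isDecomposable_of_not_isCompl hW h (by omega))

/-- Every indecomposable `k`-linear representation of the poset
`𝒫_n = {1 < 2 < ⋯ < n−1} ⊔ {1'} ⊔ {1''}` — a finite-dimensional space `V⁰` with a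
chain of subspaces `V^1 ⊇ V^2 ⊇ ⋯ ⊇ V^{n−1}` and two further subspaces `V'`, `V''`,
admitting no nontrivial compatible direct sum decomposition — has `dim V⁰ ≤ 2`. -/
theorem indecomposable_poset_rep_dim_le_two
    (k : Type) [Field k] (n : ℕ)
    (V : Type) [AddCommGroup V] [Module k V] [FiniteDimensional k V]
    (W : Fin (n - 1) → Submodule k V)
    (hW : ∀ i j : Fin (n - 1), i ≤ j → W j ≤ W i)
    (V' V'' : Submodule k V)
    (hind : ¬ ∃ U U' : Submodule k V, U ≠ ⊥ ∧ U' ≠ ⊥ ∧ IsCompl U U' ∧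
      (∀ i, W i = (W i ⊓ U) ⊔ (W i ⊓ U')) ∧
      V' = (V' ⊓ U) ⊔ (V' ⊓ U') ∧ V'' = (V'' ⊓ U) ⊔ (V'' ⊓ U')) :
    Module.finrank k V ≤ 2 :=
  indecomposable_poset_rep_dim_le_two_general k n V W hW V' V'' hind
end

section
/- Let k be a field, n ≥ 2, and for 1 ≤ s < t < n define the representation W_{s,t} of the poset 𝒫_n by: total space k², W^i = k² for i ≤ s, W^i = Δ (the diagonal k(1,1)) for s < i ≤ t, W^i = 0 for i > t, W' = k ⊕ 0, W'' = 0 ⊕ k. Then W_{s,t} is indecomposable, and W_{s,t} ≅ W_{u,v} only if (s,t) = (u,v). -/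
/-- If a 1-dimensional span splits over `U ⊔ U'`, the generator lies in `U` or `U'`. -/
lemma aux_mem_or_mem {k : Type} [Field k] {x : k × k}
    {U U' : Submodule k (k × k)}
    (h : Submodule.span k {x} = (Submodule.span k {x} ⊓ U) ⊔ (Submodule.span k {x} ⊓ U')) :
    x ∈ U ∨ x ∈ U' := by
  have hxmem : x ∈ (Submodule.span k {x} ⊓ U) ⊔ (Submodule.span k {x} ⊓ U') := by
    rw [← h]; exact Submodule.mem_span_singleton_self x
  rcases Submodule.mem_sup.mp hxmem with ⟨a, ha, b, hb, hab⟩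
  obtain ⟨c, rfl⟩ := Submodule.mem_span_singleton.mp ha.1
  obtain ⟨d, rfl⟩ := Submodule.mem_span_singleton.mp hb.1
  by_cases hc : c = 0
  · right
    have hd : d • x = x := by
      have h' : c • x + d • x = x := hab
      rwa [hc, zero_smul, zero_add] at h'
    rw [← hd]; exact hb.2
  · left
    have h' : c⁻¹ • (c • x) ∈ U := Submodule.smul_mem U _ ha.2
    rwa [smul_smul, inv_mul_cancel₀ hc, one_smul] at h'

lemma aux_diag_ne_top {k : Type} [Field k] :
    Submodule.span k {((1 : k), (1 : k))} ≠ (⊤ : Submodule k (k × k)) := by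
  intro h
  have h' : ((1:k), (0:k)) ∈ Submodule.span k {((1 : k), (1 : k))} := h ▸ Submodule.mem_top
  obtain ⟨c, hc⟩ := Submodule.mem_span_singleton.mp h'
  have h1 : c * 1 = 1 := congrArg Prod.fst hc
  have h2 : c * 1 = 0 := congrArg Prod.snd hc
  simp at h1 h2; exact one_ne_zero (h1 ▸ h2)

lemma aux_diag_ne_bot {k : Type} [Field k] :
    Submodule.span k {((1 : k), (1 : k))} ≠ (⊥ : Submodule k (k × k)) := by
  intro h
  have h' : ((1:k), (1:k)) ∈ (⊥ : Submodule k (k × k)) :=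
    h ▸ Submodule.mem_span_singleton_self _
  simp [Prod.ext_iff] at h'

/-- The representation `W_{s,t}` of `𝒫_n`: total space `k²`, `W^i = k²` for `i ≤ s`,
`W^i = Δ = k(1,1)` for `s < i ≤ t`, `W^i = 0` for `i > t` (positions `1 ≤ i ≤ n−1`). -/
noncomputable def Wchain (k : Type) [Field k] (s t : ℕ) : ℕ → Submodule k (k × k) :=
  fun i => if i ≤ s then ⊤ else if i ≤ t then Submodule.span k {((1 : k), (1 : k))} else ⊥

lemma aux_wtop {k : Type} [Field k] {s t i : ℕ} (h : Wchain k s t i = ⊤) : i ≤ s := by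
  by_contra hc
  unfold Wchain at h
  rw [if_neg hc] at h
  split_ifs at h with h2
  · exact aux_diag_ne_top h
  · exact absurd h bot_ne_top

lemma aux_wbot {k : Type} [Field k] {s t i : ℕ} (hst : s ≤ t)
    (h : Wchain k s t i ≠ ⊥) : i ≤ t := by
  by_contra hc
  apply h
  unfold Wchain
  rw [if_neg (fun h' => hc (h'.trans hst)), if_neg hc]

/-- For `1 ≤ s < t < n`, the representation `W_{s,t}` of `𝒫_n` (with
`W' = k ⊕ 0`, `W'' = 0 ⊕ k`) is indecomposable, and `W_{s,t} ≅ W_{u,v}` only if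
`(s,t) = (u,v)`. -/
theorem W_indecomposable_and_pairwise_noniso
    (k : Type) [Field k] (n : ℕ) (hn : 2 ≤ n)
    (s t : ℕ) (hs : 1 ≤ s) (hst : s < t) (htn : t < n)
    (u v : ℕ) (hu : 1 ≤ u) (huv : u < v) (hvn : v < n) :
    (¬ ∃ U U' : Submodule k (k × k), U ≠ ⊥ ∧ U' ≠ ⊥ ∧ IsCompl U U' ∧
        (∀ i, 1 ≤ i → i ≤ n - 1 →
          Wchain k s t i = (Wchain k s t i ⊓ U) ⊔ (Wchain k s t i ⊓ U')) ∧
        (Submodule.span k {((1 : k), (0 : k))}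
          = (Submodule.span k {((1 : k), (0 : k))} ⊓ U)
            ⊔ (Submodule.span k {((1 : k), (0 : k))} ⊓ U')) ∧
        (Submodule.span k {((0 : k), (1 : k))}
          = (Submodule.span k {((0 : k), (1 : k))} ⊓ U)
            ⊔ (Submodule.span k {((0 : k), (1 : k))} ⊓ U'))) ∧
    ((∃ e : (k × k) ≃ₗ[k] (k × k),
        (∀ i, 1 ≤ i → i ≤ n - 1 →
          (Wchain k s t i).map (e : (k × k) →ₗ[k] (k × k)) = Wchain k u v i) ∧
        (Submodule.span k {((1 : k), (0 : k))}).map (e : (k × k) →ₗ[k] (k × k))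
          = Submodule.span k {((1 : k), (0 : k))} ∧
        (Submodule.span k {((0 : k), (1 : k))}).map (e : (k × k) →ₗ[k] (k × k))
          = Submodule.span k {((0 : k), (1 : k))}) → (s, t) = (u, v)) := by
  constructor
  · rintro ⟨U, U', hU, hU', hcompl, hchain, hW1, hW2⟩
    have hWtt : Wchain k s t t = Submodule.span k {((1:k),(1:k))} := by
      unfold Wchain; rw [if_neg (by omega), if_pos le_rfl]
    have hd := hchain t (by omega) (by omega)
    rw [hWtt] at hd
    have m1 := aux_mem_or_mem hW1
    have m2 := aux_mem_or_mem hW2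
    have m3 := aux_mem_or_mem hd
    have pair12 : ∀ W : Submodule k (k × k),
        ((1:k),(0:k)) ∈ W → ((0:k),(1:k)) ∈ W → W = ⊤ := by
      intro W h1 h2
      rw [eq_top_iff]
      rintro ⟨a, b⟩ -
      have hab : (a, b) = a • ((1:k),(0:k)) + b • ((0:k),(1:k)) := by
        simp [Prod.ext_iff]
      rw [hab]
      exact W.add_mem (W.smul_mem a h1) (W.smul_mem b h2)
    have pair13 : ∀ W : Submodule k (k × k),
        ((1:k),(0:k)) ∈ W → ((1:k),(1:k)) ∈ W → W = ⊤ := by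
      intro W h1 h3
      refine pair12 W h1 ?_
      have hm := W.sub_mem h3 h1
      rwa [show ((1:k),(1:k)) - ((1:k),(0:k)) = ((0:k),(1:k)) from by
        rw [Prod.mk_sub_mk]; norm_num] at hm
    have pair23 : ∀ W : Submodule k (k × k),
        ((0:k),(1:k)) ∈ W → ((1:k),(1:k)) ∈ W → W = ⊤ := by
      intro W h2 h3
      refine pair12 W ?_ h2
      have hm := W.sub_mem h3 h2
      rwa [show ((1:k),(1:k)) - ((0:k),(1:k)) = ((1:k),(0:k)) from by
        rw [Prod.mk_sub_mk]; norm_num] at hm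
    have contU : U ≠ ⊤ := fun h => hU' (by simpa [h] using hcompl.disjoint.eq_bot)
    have contU' : U' ≠ ⊤ := fun h => hU (by simpa [h] using hcompl.disjoint.eq_bot)
    rcases m1 with h1 | h1 <;> rcases m2 with h2 | h2 <;> rcases m3 with h3 | h3
    · exact contU (pair12 U h1 h2)
    · exact contU (pair12 U h1 h2)
    · exact contU (pair13 U h1 h3)
    · exact contU' (pair23 U' h2 h3)
    · exact contU (pair23 U h2 h3)
    · exact contU' (pair13 U' h1 h3)
    · exact contU' (pair12 U' h1 h2)
    · exact contU' (pair12 U' h1 h2)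
  · rintro ⟨e, hchain, -, -⟩
    have hinj := Submodule.map_injective_of_injective
      (f := (e : (k × k) →ₗ[k] (k × k))) e.injective
    have htopmap : (⊤ : Submodule k (k × k)).map (e : (k × k) →ₗ[k] (k × k)) = ⊤ := by
      rw [Submodule.map_top, LinearMap.range_eq_top]; exact e.surjective
    -- s ≤ u
    have h1 := hchain s hs (by omega)
    have hWss : Wchain k s t s = ⊤ := by unfold Wchain; rw [if_pos le_rfl]
    rw [hWss, htopmap] at h1
    have hsu : s ≤ u := aux_wtop h1.symm
    -- u ≤ s
    have h2 := hchain u hu (by omega)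
    have hWuu : Wchain k u v u = ⊤ := by unfold Wchain; rw [if_pos le_rfl]
    rw [hWuu] at h2
    have hus : u ≤ s := aux_wtop (hinj (by rw [h2, htopmap]))
    -- t ≤ v
    have h3 := hchain t (by omega) (by omega)
    have hWtt : Wchain k s t t = Submodule.span k {((1:k),(1:k))} := by
      unfold Wchain; rw [if_neg (by omega), if_pos le_rfl]
    rw [hWtt] at h3
    have htv : t ≤ v := aux_wbot huv.le
      (fun hb => aux_diag_ne_bot (hinj (by rw [h3, hb, Submodule.map_bot])))
    -- v ≤ t
    have h4 := hchain v (by omega) (by omega)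
    have hWvv : Wchain k u v v = Submodule.span k {((1:k),(1:k))} := by
      unfold Wchain; rw [if_neg (by omega), if_pos le_rfl]
    rw [hWvv] at h4
    have hvt : v ≤ t := aux_wbot hst.le
      (fun hb => aux_diag_ne_bot (by rw [← h4, hb, Submodule.map_bot]))
    simp only [Prod.mk.injEq]
    omega
end

section
/- Let Λ be a commutative local uniserial ring of length n, p a radical generator, k = Λ/(p). For a pair (B;A) with p²A = 0 set A⁻ = rad A = pA and A⁺ = A + soc B = p^{−1}(pA). Then multiplication by p^ℓ induces a k-linear isomorphism from p^{−ℓ−1}(pA)/p^{−ℓ}(pA) onto ((rad^ℓ B ∩ A⁺) + A⁻)/A⁻ for each 1 ≤ ℓ ≤ n−1. -/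
/-- Over a commutative local uniserial ring `Λ` of length `n`, for a pair
`(B;A)` with `p²A = 0`, set `A⁻ = pA`, `A⁺ = A + soc B = p^{−1}(pA)` and
`L_j = p^{−j}(pA)`.  For `1 ≤ ℓ ≤ n−1`, multiplication by `p^ℓ` induces a (`k`-linear)
isomorphism `L_{ℓ+1}/L_ℓ ≅ ((p^ℓB ∩ A⁺) + A⁻)/A⁻`: the map `x ↦ p^ℓ x mod A⁻` on
`L_{ℓ+1}` has kernel `L_ℓ` and image `((p^ℓB ∩ A⁺) + A⁻)/A⁻`. -/
theorem multiplication_induces_iso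
    (Λ : Type) [CommRing Λ] [IsLocalRing Λ] (p : Λ) (n : ℕ)
    (hmax : IsLocalRing.maximalIdeal Λ = Ideal.span {p})
    (huni : ∀ I J : Ideal Λ, I ≤ J ∨ J ≤ I)
    (hlen : p ^ n = 0) (hlen' : p ^ (n - 1) ≠ 0)
    (B : Type) [AddCommGroup B] [Module Λ B] [Module.Finite Λ B]
    (A : Submodule Λ B) (hp2A : ∀ a ∈ A, p ^ 2 • a = 0)
    (ℓ : ℕ) (hℓ : 1 ≤ ℓ) (hℓn : ℓ ≤ n - 1)
    (Aminus Aplus : Submodule Λ B) (L : ℕ → Submodule Λ B)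
    (hAminus : Aminus = A.map (LinearMap.lsmul Λ B p))
    (hAplus : Aplus = A ⊔ LinearMap.ker (LinearMap.lsmul Λ B p))
    (hL : ∀ j, L j = Submodule.comap (LinearMap.lsmul Λ B (p ^ j)) Aminus)
    (f : L (ℓ + 1) →ₗ[Λ] B ⧸ Aminus)
    (hf : f = (Aminus.mkQ ∘ₗ LinearMap.lsmul Λ B (p ^ ℓ)) ∘ₗ (L (ℓ + 1)).subtype) :
    LinearMap.ker f = Submodule.comap (L (ℓ + 1)).subtype (L ℓ) ∧
    LinearMap.range f
      = (((LinearMap.range (LinearMap.lsmul Λ B (p ^ ℓ))) ⊓ Aplus) ⊔ Aminus).map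
          Aminus.mkQ := by
  -- key equality: map p^ℓ (L (ℓ+1)) = range p^ℓ ⊓ Aplus
  have key : (L (ℓ + 1)).map (LinearMap.lsmul Λ B (p ^ ℓ))
      = LinearMap.range (LinearMap.lsmul Λ B (p ^ ℓ)) ⊓ Aplus := by
    ext y
    constructor
    · rintro ⟨b, hb, rfl⟩
      simp only [hL, hAminus, SetLike.mem_coe, Submodule.mem_comap] at hb
      obtain ⟨a, ha, hpa⟩ := hb
      refine ⟨⟨b, rfl⟩, ?_⟩
      rw [hAplus]
      refine Submodule.mem_sup.2 ⟨a, ha, (p ^ ℓ) • b - a, ?_, by abel⟩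
      simp only [LinearMap.mem_ker, LinearMap.lsmul_apply, smul_sub]
      simp only [LinearMap.lsmul_apply] at hpa
      rw [hpa, smul_smul, ← pow_succ', sub_self]
    · rintro ⟨⟨b, rfl⟩, hy⟩
      rw [hAplus] at hy
      obtain ⟨a, ha, k, hk, hak⟩ := Submodule.mem_sup.1 hy
      refine ⟨b, ?_, rfl⟩
      simp only [hL, hAminus, SetLike.mem_coe, Submodule.mem_comap]
      refine ⟨a, ha, ?_⟩
      simp only [LinearMap.lsmul_apply] at *
      have : p • ((p ^ ℓ) • b) = p • a + p • k := by rw [← hak, smul_add]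
      rw [LinearMap.mem_ker, LinearMap.lsmul_apply] at hk
      rw [hk, add_zero] at this
      rw [← this, smul_smul, ← pow_succ']
  constructor
  · ext x
    simp only [LinearMap.mem_ker, hf, LinearMap.comp_apply, Submodule.subtype_apply,
      Submodule.mkQ_apply, Submodule.Quotient.mk_eq_zero, Submodule.mem_comap, hL,
      LinearMap.lsmul_apply]
  · have h1 : LinearMap.range f = ((L (ℓ + 1)).map (LinearMap.lsmul Λ B (p ^ ℓ))).map
        Aminus.mkQ := by
      rw [hf, LinearMap.range_comp, Submodule.range_subtype, Submodule.map_comp]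
    rw [h1, key, Submodule.map_sup]
    have : Aminus.map Aminus.mkQ = ⊥ := by
      rw [Submodule.eq_bot_iff]
      rintro x ⟨y, hy, rfl⟩
      simpa [Submodule.Quotient.mk_eq_zero] using hy
    rw [this, sup_bot_eq]
end

section
/- Let Λ be a commutative local uniserial ring of length n with radical generator p. Consider pairs (B_i;A_i) (0 ≤ i ≤ n+1) with p²A_i = 0 and morphisms f_i : (B_{i−1};A_{i−1}) → (B_i;A_i) satisfying f_i(A_{i−1} + soc B_{i−1}) ⊆ rad A_i for all i. Then the composition f_{n+1} ∘ ⋯ ∘ f_1 = 0. Moreover, if n > 1, there exist such pairs and n composable morphisms each satisfying the ideal condition whose composition is nonzero; hence the ideal 𝒩 has nilpotency index exactly n+1. -/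
/-- Composition `f_{m} ∘ ⋯ ∘ f_1 : B 0 → B m` of a chain of linear maps. -/
def chainComp {Λ : Type} [CommRing Λ] {B : ℕ → Type}
    [∀ i, AddCommGroup (B i)] [∀ i, Module Λ (B i)]
    (f : ∀ i, B i →ₗ[Λ] B (i + 1)) : ∀ m, B 0 →ₗ[Λ] B m
  | 0 => LinearMap.id
  | (m + 1) => (f m).comp (chainComp f m)

/-- In a local ring with maximal ideal `(p)` and `p ^ m ≠ 0`, any annihilator of `p`
lies in `(p ^ m)`. -/
lemma ann_p_mem (Λ : Type) [CommRing Λ] [IsLocalRing Λ] (p : Λ) (m : ℕ)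
    (hmax : IsLocalRing.maximalIdeal Λ = Ideal.span {p})
    (hlen' : p ^ m ≠ 0) (hm : 1 ≤ m)
    (y : Λ) (hy : p * y = 0) : y ∈ Ideal.span {p ^ m} := by
  classical
  by_contra h
  have hex : ∃ k, y ∉ Ideal.span {p ^ (k + 1)} :=
    ⟨m - 1, by rwa [Nat.sub_add_cancel hm]⟩
  set k := Nat.find hex with hkdef
  have hk1 : y ∉ Ideal.span {p ^ (k + 1)} := Nat.find_spec hex
  have hk0 : y ∈ Ideal.span {p ^ k} := by
    rcases Nat.eq_zero_or_pos k with h0 | h0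
    · rw [h0, pow_zero]
      exact Ideal.mem_span_singleton.mpr ⟨y, (one_mul y).symm⟩
    · have hmin := Nat.find_min hex (show k - 1 < k by omega)
      rw [not_not] at hmin
      have hks : k - 1 + 1 = k := by omega
      rwa [hks] at hmin
  obtain ⟨c, hc⟩ := Ideal.mem_span_singleton.mp hk0
  have hcu : IsUnit c := by
    by_contra hcu
    have hcm : c ∈ IsLocalRing.maximalIdeal Λ := hcu
    rw [hmax, Ideal.mem_span_singleton] at hcm
    obtain ⟨d, hd⟩ := hcm
    exact hk1 (Ideal.mem_span_singleton.mpr ⟨d, by rw [hc, hd, pow_succ]; ring⟩)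
  have hpk1 : p ^ (k + 1) = 0 := by
    obtain ⟨v, hv⟩ := hcu.exists_right_inv
    have h0 : p ^ (k + 1) * c = 0 := by
      rw [pow_succ]
      calc p ^ k * p * c = p * (p ^ k * c) := by ring
        _ = p * y := by rw [← hc]
        _ = 0 := hy
    calc p ^ (k + 1) = p ^ (k + 1) * (c * v) := by rw [hv, mul_one]
      _ = p ^ (k + 1) * c * v := by ring
      _ = 0 := by rw [h0, zero_mul]
  have hkm : k + 1 ≤ m := by
    have hle : k ≤ m - 1 := Nat.find_min' hex (by rwa [Nat.sub_add_cancel hm])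
    omega
  apply hlen'
  calc p ^ m = p ^ (k + 1) * p ^ (m - (k + 1)) := by
        rw [← pow_add]; congr 1; omega
    _ = 0 := by rw [hpk1, zero_mul]

/-- Over a commutative local uniserial ring `Λ` of length `n`, any `n+1`
composable morphisms `f_i : (B_{i−1};A_{i−1}) → (B_i;A_i)` of pairs with `p²A_i = 0`,
each lying in the ideal `𝒩` (i.e. `f_i(A_{i−1} + soc B_{i−1}) ⊆ rad A_i = pA_i`),
compose to zero.  Moreover, if `n > 1` there exist `n` composable morphisms in `𝒩`
between such pairs with nonzero composition; hence `𝒩` has nilpotency index `n+1`. -/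
theorem ideal_N_nilpotency
    (Λ : Type) [CommRing Λ] [IsLocalRing Λ] (p : Λ) (n : ℕ)
    (hmax : IsLocalRing.maximalIdeal Λ = Ideal.span {p})
    (huni : ∀ I J : Ideal Λ, I ≤ J ∨ J ≤ I)
    (hlen : p ^ n = 0) (hlen' : p ^ (n - 1) ≠ 0)
    (B : ℕ → Type) [∀ i, AddCommGroup (B i)] [∀ i, Module Λ (B i)]
    (A : ∀ i, Submodule Λ (B i))
    (hp2 : ∀ i, ∀ a ∈ A i, p ^ 2 • a = 0)
    (f : ∀ i, B i →ₗ[Λ] B (i + 1))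
    (hmor : ∀ i, ∀ a ∈ A i, f i a ∈ A (i + 1))
    (hN : ∀ i, ∀ x ∈ A i ⊔ LinearMap.ker (LinearMap.lsmul Λ (B i) p),
      f i x ∈ (A (i + 1)).map (LinearMap.lsmul Λ (B (i + 1)) p)) :
    chainComp f (n + 1) = 0 ∧
    (1 < n →
      ∃ (A' : ℕ → Submodule Λ (Λ ⧸ Ideal.span {p ^ n}))
        (g : ∀ _ : ℕ, (Λ ⧸ Ideal.span {p ^ n}) →ₗ[Λ] (Λ ⧸ Ideal.span {p ^ n})),
        (∀ i, ∀ a ∈ A' i, p ^ 2 • a = 0) ∧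
        (∀ i, ∀ a ∈ A' i, g i a ∈ A' (i + 1)) ∧
        (∀ i, ∀ x ∈ A' i ⊔
            LinearMap.ker (LinearMap.lsmul Λ (Λ ⧸ Ideal.span {p ^ n}) p),
          g i x ∈ (A' (i + 1)).map (LinearMap.lsmul Λ (Λ ⧸ Ideal.span {p ^ n}) p)) ∧
        chainComp (B := fun _ => Λ ⧸ Ideal.span {p ^ n}) g n ≠ 0) := by
  classical
  obtain ⟨m, rfl⟩ : ∃ m, n = m + 1 := by
    cases n with
    | zero => simp at hlen hlen'
    | succ m => exact ⟨m, rfl⟩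
  have hm1 : p ^ m ≠ 0 := by simpa using hlen'
  constructor
  · -- Part 1: chainComp f (m + 2) = 0
    apply LinearMap.ext
    intro x
    have key : ∀ i, i ≤ m → ∃ a ∈ A (i + 1),
        p ^ (m - i) • chainComp f (i + 1) x = p • a := by
      intro i
      induction i with
      | zero =>
        intro _
        have hs : p ^ m • x ∈ A 0 ⊔ LinearMap.ker (LinearMap.lsmul Λ (B 0) p) := by
          apply Submodule.mem_sup_right
          rw [LinearMap.mem_ker, LinearMap.lsmul_apply, smul_smul, ← pow_succ',
            hlen, zero_smul]
        obtain ⟨a, ha, hae⟩ := hN 0 _ hs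
        refine ⟨a, ha, ?_⟩
        have hcc : chainComp f 1 x = f 0 x := rfl
        rw [hcc, Nat.sub_zero, ← map_smul]
        exact hae.symm
      | succ i ih =>
        intro hi
        obtain ⟨a, ha, hae⟩ := ih (by omega)
        have hz : p ^ (m - (i + 1)) • chainComp f (i + 1) x - a ∈
            LinearMap.ker (LinearMap.lsmul Λ (B (i + 1)) p) := by
          rw [LinearMap.mem_ker, map_sub, LinearMap.lsmul_apply, LinearMap.lsmul_apply,
            smul_smul, ← pow_succ']
          have he : m - (i + 1) + 1 = m - i := by omega
          rw [he, hae, sub_self]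
        have hmem : p ^ (m - (i + 1)) • chainComp f (i + 1) x ∈
            A (i + 1) ⊔ LinearMap.ker (LinearMap.lsmul Λ (B (i + 1)) p) := by
          have hd : p ^ (m - (i + 1)) • chainComp f (i + 1) x
              = a + (p ^ (m - (i + 1)) • chainComp f (i + 1) x - a) := by abel
          rw [hd]
          exact Submodule.add_mem_sup ha hz
        obtain ⟨b, hb, hbe⟩ := hN (i + 1) _ hmem
        refine ⟨b, hb, ?_⟩
        have hcc : chainComp f (i + 1 + 1) x = f (i + 1) (chainComp f (i + 1) x) := rfl
        rw [hcc, ← map_smul]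
        exact hbe.symm
    obtain ⟨a, ha, hae⟩ := key m le_rfl
    rw [Nat.sub_self, pow_zero, one_smul] at hae
    obtain ⟨b, hb, hbe⟩ := hN (m + 1) a (Submodule.mem_sup_left ha)
    have hcc : chainComp f (m + 1 + 1) x = f (m + 1) (chainComp f (m + 1) x) := rfl
    rw [LinearMap.zero_apply, hcc, hae, map_smul, ← hbe, LinearMap.lsmul_apply,
      smul_smul, ← sq]
    exact hp2 (m + 2) b hb
  · -- Part 2
    intro h1
    have hm : 1 ≤ m := by omega
    set Q := Λ ⧸ Ideal.span {p ^ (m + 1)} with hQ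
    set mk : Λ →ₗ[Λ] Q := (Ideal.span {p ^ (m + 1)}).mkQ with hmkdef
    have hbot : Ideal.span {p ^ (m + 1)} = ⊥ := by
      rw [hlen]; exact Ideal.span_singleton_eq_bot.mpr rfl
    have hmk0 : ∀ a : Λ, mk a = 0 ↔ a = 0 := by
      intro a
      rw [hmkdef, Submodule.mkQ_apply, Submodule.Quotient.mk_eq_zero, hbot,
        Submodule.mem_bot]
    have hsurj : Function.Surjective mk := Submodule.mkQ_surjective _
    have hsmul : ∀ (c a : Λ), c • mk a = mk (c * a) := by
      intro c a; rw [← map_smul, smul_eq_mul]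
    have hpm : p ^ m = p * p ^ (m - 1) := by
      rw [← pow_succ']; congr 1; omega
    have hgen : mk (p ^ m) = p • mk (p ^ (m - 1)) := by
      rw [hsmul, hpm]
    have hsoc : LinearMap.ker (LinearMap.lsmul Λ Q p) ≤
        Submodule.span Λ {mk (p ^ m)} := by
      intro q hq
      obtain ⟨y, rfl⟩ := hsurj q
      rw [LinearMap.mem_ker, LinearMap.lsmul_apply, hsmul, hmk0] at hq
      obtain ⟨c, hc⟩ := Ideal.mem_span_singleton.mp
        (ann_p_mem Λ p m hmax hm1 hm y hq)
      exact Submodule.mem_span_singleton.mpr ⟨c, by rw [hsmul, hc, mul_comm]⟩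
    have hTle : Submodule.span Λ {mk (p ^ m)} ≤
        Submodule.span Λ {mk (p ^ (m - 1))} := by
      rw [Submodule.span_le]
      intro z hz
      rw [Set.mem_singleton_iff] at hz
      rw [hz, SetLike.mem_coe, hgen]
      exact Submodule.smul_mem _ _ (Submodule.mem_span_singleton_self _)
    refine ⟨fun i => Submodule.span Λ {mk (p ^ (if i = 0 then m else m - 1))},
      fun i => if i = 0 then LinearMap.id else LinearMap.lsmul Λ Q p, ?_, ?_, ?_, ?_⟩
    · -- p² A' = 0
      intro i a ha
      obtain ⟨c, rfl⟩ := Submodule.mem_span_singleton.mp ha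
      have hei : m - 1 ≤ (if i = 0 then m else m - 1) := by split <;> omega
      have hz : p ^ (2 + (if i = 0 then m else m - 1)) = 0 := by
        have he : 2 + (if i = 0 then m else m - 1)
            = (m + 1) + (2 + (if i = 0 then m else m - 1) - (m + 1)) := by omega
        rw [he, pow_add, hlen, zero_mul]
      have he' : p ^ 2 * c * p ^ (if i = 0 then m else m - 1) = 0 := by
        calc p ^ 2 * c * p ^ (if i = 0 then m else m - 1)
            = c * (p ^ 2 * p ^ (if i = 0 then m else m - 1)) := by ring
          _ = c * p ^ (2 + (if i = 0 then m else m - 1)) := by rw [← pow_add]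
          _ = 0 := by rw [hz, mul_zero]
      rw [smul_smul, hsmul, he', map_zero]
    · -- morphisms of pairs
      intro i a ha
      obtain ⟨c, rfl⟩ := Submodule.mem_span_singleton.mp ha
      cases i with
      | zero =>
        show c • mk (p ^ m) ∈ Submodule.span Λ {mk (p ^ (m - 1))}
        rw [hgen, smul_smul]
        exact Submodule.smul_mem _ _ (Submodule.mem_span_singleton_self _)
      | succ j =>
        show p • (c • mk (p ^ (m - 1))) ∈ Submodule.span Λ {mk (p ^ (m - 1))}
        exact Submodule.smul_mem _ _
          (Submodule.smul_mem _ _ (Submodule.mem_span_singleton_self _))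
    · -- ideal condition
      intro i x hx
      cases i with
      | zero =>
        have hxm : x ∈ Submodule.span Λ {mk (p ^ m)} :=
          (sup_le (le_refl (Submodule.span Λ {mk (p ^ m)})) hsoc) hx
        obtain ⟨c, rfl⟩ := Submodule.mem_span_singleton.mp hxm
        refine ⟨c • mk (p ^ (m - 1)), ?_, ?_⟩
        · exact Submodule.smul_mem _ _ (Submodule.mem_span_singleton_self _)
        · show p • (c • mk (p ^ (m - 1))) = c • mk (p ^ m)
          rw [hsmul, hsmul, hsmul]
          congr 1
          rw [hpm]; ring
      | succ j =>
        have hxm : x ∈ Submodule.span Λ {mk (p ^ (m - 1))} :=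
          (sup_le (le_refl (Submodule.span Λ {mk (p ^ (m - 1))}))
            (hsoc.trans hTle)) hx
        exact ⟨x, hxm, rfl⟩
    · -- nonzero composition
      intro hzero
      have hcomp : ∀ k, chainComp (B := fun _ => Q)
          (fun i => if i = 0 then LinearMap.id else LinearMap.lsmul Λ Q p)
          (k + 1) (mk 1) = mk (p ^ k) := by
        intro k
        induction k with
        | zero =>
          show (LinearMap.id : Q →ₗ[Λ] Q) ((LinearMap.id : Q →ₗ[Λ] Q) (mk 1)) = mk (p ^ 0)
          rw [pow_zero, LinearMap.id_apply, LinearMap.id_apply]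
        | succ k ih =>
          have hcc : chainComp (B := fun _ => Q)
              (fun i => if i = 0 then LinearMap.id else LinearMap.lsmul Λ Q p)
              (k + 1 + 1) (mk 1)
              = LinearMap.lsmul Λ Q p (chainComp (B := fun _ => Q)
                (fun i => if i = 0 then LinearMap.id else LinearMap.lsmul Λ Q p)
                (k + 1) (mk 1)) := rfl
          rw [hcc, ih, LinearMap.lsmul_apply, hsmul, ← pow_succ']
      apply hm1
      rw [← hmk0 (p ^ m), ← hcomp m, hzero, LinearMap.zero_apply]
end
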